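/- arXiv:math/0506478 — 9 statements merged into one kernel-verified Lean document; each statement's English description precedes it below -/
import Mathlib

section
/- Let G = (V, E) be the (finite) graph of a neighbourly abstract cubical complex K = (V, 𝒞). Then the edge expansion of G satisfies χ(G) ≥ 1; that is, for every nonempty subset X ⊆ V with |X| ≤ |V|/2, the number of edges of G with exactly one endpoint in X is at least |X|. -/
/-! Neighbourliness gives every pair `(u, w)` of vertices a least common cube, in which `u`
and `w` are antipodal. Route `(u, w)` along the monotone path from `u` to `w` that flips the
coordinates of a fixed chart of that cube in increasing order. If `X` separates `u` from `w`,
the route crosses an edge of `∂X`. An edge `e` lies on at most `|V|` routes, because such a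
route is determined by the antipode, in its cube, of the endpoint of `e` it visits first.
Double counting the `2|X|(|V| - |X|)` separated pairs then gives
`2|X|(|V| - |X|) ≤ |V| |∂X|`, so `|X| ≤ |∂X|` whenever `2|X| ≤ |V|`. -/

/-- A subset of the vertex set of the cube `{0,1}^d` is a *face* if it is obtained by
fixing some set of coordinates to constant values. -/
def IsCubeFace {d : ℕ} (s : Set (Fin d → Bool)) : Prop :=
  ∃ (S : Set (Fin d)) (a : Fin d → Bool), s = {x | ∀ j ∈ S, x j = a j}

/-- An abstract cubical complex on a vertex set `V`: a collection of "cubes" that is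
closed under pairwise intersection (up to the empty set), each cube being in bijection
with some `{0,1}^d` in such a way that the subcubes of the complex contained in it
correspond exactly to the faces of `{0,1}^d`. -/
structure AbstractCubicalComplex (V : Type*) where
  cubes : Set (Set V)
  inter_closed : ∀ c₁ ∈ cubes, ∀ c₂ ∈ cubes, c₁ ∩ c₂ = ∅ ∨ c₁ ∩ c₂ ∈ cubes
  cube_structure : ∀ c ∈ cubes, ∃ (d : ℕ) (φ : (Fin d → Bool) → V),
    Function.Injective φ ∧ Set.range φ = c ∧
    ∀ s : Set (Fin d → Bool), φ '' s ∈ cubes ↔ IsCubeFace s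

/-- A cubical complex is neighbourly if every pair of vertices lies in a common cube. -/
def IsNeighbourly {V : Type*} (K : AbstractCubicalComplex V) : Prop :=
  ∀ v w : V, ∃ c ∈ K.cubes, v ∈ c ∧ w ∈ c

/-- The graph of an abstract cubical complex: two vertices are adjacent iff they form
a 1-dimensional cube of the complex. -/
def complexGraph {V : Type*} (K : AbstractCubicalComplex V) : SimpleGraph V where
  Adj v w := v ≠ w ∧ ({v, w} : Set V) ∈ K.cubes
  symm := by
    constructor
    intro v w h
    exact ⟨h.1.symm, Set.pair_comm v w ▸ h.2⟩
  loopless := by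
    constructor
    intro v h
    exact h.1 rfl

/-- The set of edges of `G` with exactly one endpoint in `X`. -/
def edgeBoundary {V : Type*} (G : SimpleGraph V) (X : Set V) : Set (Sym2 V) :=
  {e | e ∈ G.edgeSet ∧ ∃ v w, e = s(v, w) ∧ v ∈ X ∧ w ∉ X}

open Finset in
lemma card_le_card_of_routes {V E : Type*} [Fintype V]
    (route : V → V → Set E) (B : Finset E) (s : Finset V) (hs : 2 * #s ≤ Fintype.card V)
    (hcross : ∀ u w, (u ∈ s ↔ w ∉ s) → ∃ e ∈ B, e ∈ route u w)
    (hload : ∀ e ∈ B, {q : V × V | e ∈ route q.1 q.2}.ncard ≤ Fintype.card V) :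
    #s ≤ #B := by
  classical
  set n := Fintype.card V
  let C := s ×ˢ sᶜ ∪ sᶜ ×ˢ s
  have hC : #C = 2 * (#s * (n - #s)) := by
    rw [card_union_of_disjoint (disjoint_left.2 fun q h h' =>
      (mem_compl.1 (mem_product.1 h').1) (mem_product.1 h).1), card_product, card_product,
      card_compl]
    ring
  let r : V × V → E → Prop := fun q e => e ∈ route q.1 q.2
  have hcrossC : ∀ q ∈ C, 1 ≤ #(B.bipartiteAbove r q) := by
    intro q hq
    simp only [C, mem_union, mem_product, mem_compl] at hq
    obtain ⟨e, he, hroute⟩ := hcross q.1 q.2 (by tauto)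
    exact card_pos.2 ⟨e, (mem_bipartiteAbove _).2 ⟨he, hroute⟩⟩
  have hloadC : ∀ e ∈ B, #(C.bipartiteBelow r e) ≤ n := fun e he =>
    calc #(C.bipartiteBelow r e) = (C.bipartiteBelow r e : Set (V × V)).ncard :=
          (Set.ncard_coe_finset _).symm
      _ ≤ {q : V × V | e ∈ route q.1 q.2}.ncard :=
          Set.ncard_le_ncard fun q hq => ((mem_bipartiteBelow _).1 hq).2
      _ ≤ n := hload e he
  have hkn : #s * n ≤ #B * n :=
    calc #s * n ≤ #s * (2 * (n - #s)) := Nat.mul_le_mul_left _ (by omega)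
      _ = #C * 1 := by rw [hC]; ring
      _ ≤ #B * n := card_mul_le_card_mul r hcrossC hloadC
  rcases n.eq_zero_or_pos with hn | hn
  · omega
  · exact Nat.le_of_mul_le_mul_right hkn hn

lemma exists_lt_iff_not_succ {P : ℕ → Prop} :
    ∀ {n : ℕ}, (P 0 ↔ ¬P n) → ∃ t < n, (P t ↔ ¬P (t + 1))
  | 0, h => absurd h iff_not_self
  | n + 1, h => by
    by_cases hn : P n ↔ ¬P (n + 1)
    · exact ⟨n, n.lt_succ_self, hn⟩
    · obtain ⟨t, ht, hPt⟩ := exists_lt_iff_not_succ (P := P) (n := n) (by tauto)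
      exact ⟨t, by omega, hPt⟩

lemma mem_edgeBoundary_of_adj {V : Type*} {G : SimpleGraph V} {X : Set V} {v w : V}
    (h : G.Adj v w) (hX : v ∈ X ↔ w ∉ X) : s(v, w) ∈ edgeBoundary G X := by
  refine ⟨h, ?_⟩
  by_cases hv : v ∈ X
  · exact ⟨v, w, rfl, hv, hX.1 hv⟩
  · exact ⟨w, v, Sym2.eq_swap, not_not.1 (mt hX.2 hv), hv⟩

section CubeFaces

variable {d : ℕ}

lemma isCubeFace_univ : IsCubeFace (Set.univ : Set (Fin d → Bool)) :=
  ⟨∅, fun _ => true, by simp⟩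

def cubeSpan (x y : Fin d → Bool) : Set (Fin d → Bool) :=
  {z | ∀ j, x j = y j → z j = x j}

lemma isCubeFace_cubeSpan (x y : Fin d → Bool) : IsCubeFace (cubeSpan x y) :=
  ⟨{j | x j = y j}, x, rfl⟩

lemma left_mem_cubeSpan (x y : Fin d → Bool) : x ∈ cubeSpan x y := fun _ _ => rfl

lemma right_mem_cubeSpan (x y : Fin d → Bool) : y ∈ cubeSpan x y := fun _ h => h.symm

lemma IsCubeFace.cubeSpan_subset {s : Set (Fin d → Bool)} (hs : IsCubeFace s)
    {x y : Fin d → Bool} (hx : x ∈ s) (hy : y ∈ s) : cubeSpan x y ⊆ s := by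
  obtain ⟨S, a, rfl⟩ := hs
  intro z hz j hj
  rw [hz j ((hx j hj).trans (hy j hj).symm), hx j hj]

lemma cubeSpan_compl (x : Fin d → Bool) : cubeSpan x xᶜ = Set.univ := by
  ext z
  simp [cubeSpan]

lemma eq_compl_of_cubeSpan_eq_univ {x y : Fin d → Bool} (h : cubeSpan x y = Set.univ) :
    y = xᶜ := by
  funext j
  by_contra hne
  have hxy : x j = y j := by
    cases hx : x j <;> cases hy : y j <;> simp_all
  have := (h ▸ Set.mem_univ (Function.update x j (!x j)) : _ ∈ cubeSpan x y) j hxy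
  simp at this

lemma cubeSpan_update_not (a : Fin d → Bool) (i : Fin d) :
    cubeSpan a (Function.update a i (!a i)) = {a, Function.update a i (!a i)} := by
  ext z
  simp only [cubeSpan, Set.mem_ofPred_eq, Set.mem_insert_iff, Set.mem_singleton_iff]
  constructor
  · intro h
    have hoff : ∀ j ≠ i, z j = a j := fun j hj => h j (by simp [hj])
    nth_rewrite 1 [← Function.update_eq_self i a]
    simp only [Function.eq_update_iff]
    rcases Bool.eq_or_eq_not (z i) (a i) with hzi | hzi
    · exact .inl ⟨hzi, hoff⟩
    · exact .inr ⟨hzi, hoff⟩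
  · rintro (rfl | rfl)
    · exact left_mem_cubeSpan _ _
    · exact right_mem_cubeSpan _ _

end CubeFaces

section FlipBelow

variable {d : ℕ}

def flipBelow (x : Fin d → Bool) (t : ℕ) : Fin d → Bool :=
  fun j => if (j : ℕ) < t then !x j else x j

@[simp] lemma flipBelow_zero (x : Fin d → Bool) : flipBelow x 0 = x := by
  funext j
  simp [flipBelow]

@[simp] lemma flipBelow_dim (x : Fin d → Bool) : flipBelow x d = xᶜ := by
  funext j
  simp [flipBelow]

@[simp] lemma flipBelow_flipBelow (x : Fin d → Bool) (t : ℕ) :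
    flipBelow (flipBelow x t) t = x := by
  funext j
  by_cases h : (j : ℕ) < t <;> simp [flipBelow, h]

lemma flipBelow_succ (x : Fin d → Bool) (t : Fin d) :
    flipBelow x (t + 1) = Function.update (flipBelow x t) t (!flipBelow x t t) := by
  funext j
  by_cases h : j = t
  · subst h
    simp [flipBelow]
  · have : (j : ℕ) < t + 1 ↔ (j : ℕ) < t := by
      have := Fin.val_ne_of_ne h
      omega
    simp [flipBelow, Function.update_of_ne h, this]

lemma eq_of_flipBelow_eq {x x' : Fin d → Bool} {t t' : Fin d}
    (h : flipBelow x t = flipBelow x' t') (hsucc : flipBelow x (t + 1) = flipBelow x' (t' + 1)) :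
    x = x' := by
  obtain rfl : t = t' := by
    by_contra hne
    have := congrFun hsucc t
    rw [flipBelow_succ, flipBelow_succ, ← h, Function.update_self,
      Function.update_of_ne hne] at this
    exact Bool.not_ne_self _ this
  rw [← flipBelow_flipBelow x t, h, flipBelow_flipBelow]

end FlipBelow

namespace AbstractCubicalComplex

variable {V : Type*} {K : AbstractCubicalComplex V}

structure Chart (K : AbstractCubicalComplex V) (c : Set V) where
  dim : ℕ
  toFun : (Fin dim → Bool) → V
  injective : Function.Injective toFun
  range_eq : Set.range toFun = c
  image_mem_cubes_iff : ∀ s, toFun '' s ∈ K.cubes ↔ IsCubeFace s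

instance {c : Set V} : CoeFun (K.Chart c) (fun ch => (Fin ch.dim → Bool) → V) :=
  ⟨Chart.toFun⟩

noncomputable def chart {c : Set V} (hc : c ∈ K.cubes) : K.Chart c :=
  Classical.choice <|
    let ⟨d, φ, hφ, hrange, hfaces⟩ := K.cube_structure c hc
    ⟨⟨d, φ, hφ, hrange, hfaces⟩⟩

def cubesThrough (K : AbstractCubicalComplex V) (u w : V) : Set (Set V) :=
  {c | c ∈ K.cubes ∧ u ∈ c ∧ w ∈ c}

def minCube (K : AbstractCubicalComplex V) (u w : V) : Set V :=
  sInf (K.cubesThrough u w)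

namespace Chart

variable {c : Set V} (ch : K.Chart c)

lemma apply_mem (x : Fin ch.dim → Bool) : ch x ∈ c :=
  ch.range_eq.subset ⟨x, rfl⟩

lemma exists_eq_of_mem {v : V} (hv : v ∈ c) : ∃ x, ch x = v :=
  ch.range_eq.symm.subset hv

lemma cube_mem (ch : K.Chart c) : c ∈ K.cubes := by
  simpa [ch.range_eq] using (ch.image_mem_cubes_iff _).2 isCubeFace_univ

lemma image_cubeSpan_subset {x y : Fin ch.dim → Bool} {c' : Set V} (hc' : c' ∈ K.cubes)
    (hx : ch x ∈ c') (hy : ch y ∈ c') : ch '' cubeSpan x y ⊆ c' := by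
  have hinter : c ∩ c' ∈ K.cubes :=
    (K.inter_closed c ch.cube_mem c' hc').resolve_left
      (Set.nonempty_iff_ne_empty.1 ⟨ch x, ch.apply_mem x, hx⟩)
  have hface : IsCubeFace (ch ⁻¹' c') :=
    (ch.image_mem_cubes_iff _).1 (by rwa [Set.image_preimage_eq_range_inter, ch.range_eq])
  exact Set.image_subset_iff.2 (hface.cubeSpan_subset hx hy)

lemma isLeast_image_cubeSpan (x y : Fin ch.dim → Bool) :
    IsLeast (K.cubesThrough (ch x) (ch y)) (ch '' cubeSpan x y) :=
  ⟨⟨(ch.image_mem_cubes_iff _).2 (isCubeFace_cubeSpan x y),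
      Set.mem_image_of_mem _ (left_mem_cubeSpan x y),
      Set.mem_image_of_mem _ (right_mem_cubeSpan x y)⟩,
    fun _ ⟨hc', hx, hy⟩ => ch.image_cubeSpan_subset hc' hx hy⟩

lemma isLeast_compl (x : Fin ch.dim → Bool) : IsLeast (K.cubesThrough (ch x) (ch xᶜ)) c := by
  simpa [cubeSpan_compl, ch.range_eq] using ch.isLeast_image_cubeSpan x xᶜ

lemma eq_compl_of_isLeast {x y : Fin ch.dim → Bool}
    (h : IsLeast (K.cubesThrough (ch x) (ch y)) c) : y = xᶜ := by
  have himage : ch '' cubeSpan x y = ch '' Set.univ := by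
    rw [Set.image_univ, ch.range_eq]
    exact (ch.isLeast_image_cubeSpan x y).unique h
  exact eq_compl_of_cubeSpan_eq_univ (Set.image_injective.2 ch.injective himage)

def pathSteps (x : Fin ch.dim → Bool) : Set (V × V) :=
  Set.range fun t : Fin ch.dim => (ch (flipBelow x t), ch (flipBelow x (t + 1)))

variable {ch}

lemma adj_of_mem_pathSteps {x : Fin ch.dim → Bool} {p : V × V} (hp : p ∈ ch.pathSteps x) :
    (complexGraph K).Adj p.1 p.2 := by
  obtain ⟨t, rfl⟩ := hp
  dsimp only
  rw [flipBelow_succ]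
  refine ⟨fun h => Bool.not_ne_self (flipBelow x t t) ?_, ?_⟩
  · simpa using congrFun (ch.injective h) t
  · rw [← Set.image_pair, ← cubeSpan_update_not]
    exact (ch.image_mem_cubes_iff _).2 (isCubeFace_cubeSpan _ _)

lemma eq_of_mem_pathSteps {x x' : Fin ch.dim → Bool} {p : V × V} (hp : p ∈ ch.pathSteps x)
    (hp' : p ∈ ch.pathSteps x') : x = x' := by
  obtain ⟨t, rfl⟩ := hp
  obtain ⟨t', ht'⟩ := hp'
  simp only [Prod.mk.injEq] at ht'
  exact (eq_of_flipBelow_eq (ch.injective ht'.1) (ch.injective ht'.2)).symm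

lemma exists_mem_pathSteps_edgeBoundary {X : Set V} {x : Fin ch.dim → Bool}
    (hX : ch x ∈ X ↔ ch xᶜ ∉ X) :
    ∃ p ∈ ch.pathSteps x, s(p.1, p.2) ∈ edgeBoundary (complexGraph K) X := by
  obtain ⟨t, ht, hcross⟩ :=
    exists_lt_iff_not_succ (P := fun t => ch (flipBelow x t) ∈ X) (n := ch.dim) (by simpa)
  have hp : _ ∈ ch.pathSteps x := ⟨⟨t, ht⟩, rfl⟩
  exact ⟨_, hp, mem_edgeBoundary_of_adj (adj_of_mem_pathSteps hp) hcross⟩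

end Chart

lemma isLeast_minCube (hK : IsNeighbourly K) (u w : V) :
    IsLeast (K.cubesThrough u w) (K.minCube u w) := by
  obtain ⟨c, hc, hu, hw⟩ := hK u w
  let ch := K.chart hc
  obtain ⟨x, rfl⟩ := ch.exists_eq_of_mem hu
  obtain ⟨y, rfl⟩ := ch.exists_eq_of_mem hw
  have hleast := ch.isLeast_image_cubeSpan x y
  rwa [minCube, hleast.csInf_eq]

lemma exists_isLeast_cubesThrough {c : Set V} (hc : c ∈ K.cubes) {v : V} (hv : v ∈ c) :
    ∃ z, IsLeast (K.cubesThrough v z) c := by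
  obtain ⟨x, rfl⟩ := (K.chart hc).exists_eq_of_mem hv
  exact ⟨_, (K.chart hc).isLeast_compl x⟩

lemma eq_of_isLeast_cubesThrough {c : Set V} {y y' z : V}
    (h : IsLeast (K.cubesThrough y z) c) (h' : IsLeast (K.cubesThrough y' z) c) : y = y' := by
  have hc := h.1.1
  let ch := K.chart hc
  obtain ⟨η, rfl⟩ := ch.exists_eq_of_mem h.1.2.1
  obtain ⟨η', rfl⟩ := ch.exists_eq_of_mem h'.1.2.1
  obtain ⟨ζ, rfl⟩ := ch.exists_eq_of_mem h.1.2.2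
  rw [← compl_inj_iff.1 ((ch.eq_compl_of_isLeast h).symm.trans (ch.eq_compl_of_isLeast h'))]

/-- The chart depends only on the cube `K.minCube u w`, so all routes through one cube flip
coordinates in the same order; this is what bounds the number of routes through an edge. -/
noncomputable def geodesicSteps (hK : IsNeighbourly K) (u w : V) : Set (V × V) :=
  let ch := K.chart (isLeast_minCube hK u w).1.1
  ch.pathSteps (Function.invFun ch u)

noncomputable def geodesicEdges (hK : IsNeighbourly K) (u w : V) : Set (Sym2 V) :=
  (fun p => s(p.1, p.2)) '' geodesicSteps hK u w

variable (hK : IsNeighbourly K)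

lemma exists_geodesicSteps_eq {u w : V} {c : Set V} (hc : IsLeast (K.cubesThrough u w) c) :
    ∃ x, K.chart hc.1.1 x = u ∧ K.chart hc.1.1 xᶜ = w ∧
      geodesicSteps hK u w = (K.chart hc.1.1).pathSteps x := by
  obtain rfl := (isLeast_minCube hK u w).unique hc
  let ch := K.chart hc.1.1
  have hx : ch (Function.invFun ch u) = u := Function.invFun_eq (ch.exists_eq_of_mem hc.1.2.1)
  refine ⟨_, hx, ?_, rfl⟩
  obtain ⟨y, hy⟩ := ch.exists_eq_of_mem hc.1.2.2
  have hyx : y = (Function.invFun ch u)ᶜ := ch.eq_compl_of_isLeast (by rwa [hx, hy])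
  rwa [← hyx]

lemma mem_minCube_of_mem_geodesicEdges {u w v : V} {e : Sym2 V}
    (he : e ∈ geodesicEdges hK u w) (hv : v ∈ e) : v ∈ K.minCube u w := by
  obtain ⟨x, -, -, hsteps⟩ := exists_geodesicSteps_eq hK (isLeast_minCube hK u w)
  obtain ⟨p, hp, rfl⟩ := he
  rw [hsteps] at hp
  obtain ⟨t, rfl⟩ := hp
  rcases Sym2.mem_iff.1 hv with rfl | rfl <;> exact Chart.apply_mem _ _

lemma eq_of_mem_geodesicSteps {u w u' w' : V} {p : V × V}
    (hcube : K.minCube u w = K.minCube u' w') (hp : p ∈ geodesicSteps hK u w)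
    (hp' : p ∈ geodesicSteps hK u' w') : (u, w) = (u', w') := by
  have hc := isLeast_minCube hK u w
  have hc' : IsLeast (K.cubesThrough u' w') (K.minCube u w) :=
    hcube ▸ isLeast_minCube hK u' w'
  obtain ⟨x, hxu, hxw, hsteps⟩ := exists_geodesicSteps_eq hK hc
  obtain ⟨x', hx'u, hx'w, hsteps'⟩ := exists_geodesicSteps_eq hK hc'
  rw [hsteps] at hp
  rw [hsteps'] at hp'
  obtain rfl := Chart.eq_of_mem_pathSteps hp hp'
  exact Prod.ext (hxu.symm.trans hx'u) (hxw.symm.trans hx'w)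

lemma exists_mem_geodesicEdges_edgeBoundary {X : Set V} {u w : V} (hX : u ∈ X ↔ w ∉ X) :
    ∃ e ∈ geodesicEdges hK u w, e ∈ edgeBoundary (complexGraph K) X := by
  obtain ⟨x, hxu, hxw, hsteps⟩ := exists_geodesicSteps_eq hK (isLeast_minCube hK u w)
  obtain ⟨p, hp, hpX⟩ := Chart.exists_mem_pathSteps_edgeBoundary (by rwa [hxu, hxw])
  exact ⟨_, ⟨p, hsteps ▸ hp, rfl⟩, hpX⟩

lemma eq_of_isLeast_antipode {u w u' w' z : V} {p p' : V × V}
    (hp : p ∈ geodesicSteps hK u w) (hp' : p' ∈ geodesicSteps hK u' w')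
    (he : s(p.1, p.2) = s(p'.1, p'.2))
    (hz : IsLeast (K.cubesThrough p.1 z) (K.minCube u w))
    (hz' : IsLeast (K.cubesThrough p'.1 z) (K.minCube u' w')) : (u, w) = (u', w') := by
  have hcube : K.minCube u w = K.minCube u' w' :=
    (hz.2 ⟨(isLeast_minCube hK u' w').1.1,
        mem_minCube_of_mem_geodesicEdges hK ⟨p', hp', he.symm⟩ (Sym2.mem_mk_left _ _),
        hz'.1.2.2⟩).antisymm
      (hz'.2 ⟨(isLeast_minCube hK u w).1.1,
        mem_minCube_of_mem_geodesicEdges hK ⟨p, hp, he⟩ (Sym2.mem_mk_left _ _), hz.1.2.2⟩)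
  rw [← hcube] at hz'
  have hfst : p.1 = p'.1 := eq_of_isLeast_cubesThrough hz hz'
  obtain rfl : p = p' := Prod.ext hfst (Sym2.congr_right.1 (hfst ▸ he))
  exact eq_of_mem_geodesicSteps hK hcube hp hp'

lemma ncard_setOf_mem_geodesicEdges_le [Finite V] (e : Sym2 V) :
    {q : V × V | e ∈ geodesicEdges hK q.1 q.2}.ncard ≤ Nat.card V := by
  have hanti : ∀ q : V × V, e ∈ geodesicEdges hK q.1 q.2 →
      ∃ z, ∃ p ∈ geodesicSteps hK q.1 q.2,
        s(p.1, p.2) = e ∧ IsLeast (K.cubesThrough p.1 z) (K.minCube q.1 q.2) := by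
    rintro q ⟨p, hp, rfl⟩
    obtain ⟨z, hz⟩ := exists_isLeast_cubesThrough (isLeast_minCube hK q.1 q.2).1.1
      (mem_minCube_of_mem_geodesicEdges hK ⟨p, hp, rfl⟩ (Sym2.mem_mk_left _ _))
    exact ⟨z, p, hp, rfl, hz⟩
  rcases isEmpty_or_nonempty V with hV | hV
  · simp [Set.eq_empty_of_isEmpty]
  choose! antipode hantipode using hanti
  rw [← Set.ncard_univ]
  refine Set.ncard_le_ncard_of_injOn antipode (fun _ _ => Set.mem_univ _) ?_
  intro q hq q' hq' hqq'
  obtain ⟨p, hp, rfl, hz⟩ := hantipode q hq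
  obtain ⟨p', hp', he, hz'⟩ := hantipode q' hq'
  exact eq_of_isLeast_antipode hK hp hp' he.symm hz (hqq' ▸ hz')

end AbstractCubicalComplex

theorem edge_expansion_of_neighbourly_cubical_complex_general
    {V : Type*} [Fintype V] (K : AbstractCubicalComplex V)
    (hK : IsNeighbourly K) (X : Set V)
    (hX2 : 2 * X.ncard ≤ Fintype.card V) :
    X.ncard ≤ (edgeBoundary (complexGraph K) X).ncard := by
  classical
  rw [Set.ncard_eq_toFinset_card'] at hX2
  rw [Set.ncard_eq_toFinset_card', Set.ncard_eq_toFinset_card']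
  refine card_le_card_of_routes (AbstractCubicalComplex.geodesicEdges hK) _ _ hX2
    (fun u w huw => ?_) (fun e _ => ?_)
  · obtain ⟨e, he, hbd⟩ := AbstractCubicalComplex.exists_mem_geodesicEdges_edgeBoundary hK
      (X := X) (by simpa only [Set.mem_toFinset] using huw)
    exact ⟨e, Set.mem_toFinset.2 hbd, he⟩
  · rw [← Nat.card_eq_fintype_card]
    exact AbstractCubicalComplex.ncard_setOf_mem_geodesicEdges_le hK e

/-- The graph of a neighbourly cubical complex on a finite vertex set has edge
expansion at least 1: every nonempty vertex set `X` with `|X| ≤ |V|/2` has at least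
`|X|` boundary edges. -/
theorem edge_expansion_of_neighbourly_cubical_complex
    {V : Type*} [Fintype V] (K : AbstractCubicalComplex V)
    (hK : IsNeighbourly K) (X : Set V) (hX : X.Nonempty)
    (hX2 : 2 * X.ncard ≤ Fintype.card V) :
    X.ncard ≤ (edgeBoundary (complexGraph K) X).ncard :=
  edge_expansion_of_neighbourly_cubical_complex_general K hK X hX2
end

section
/- Let G = (V, E) be a finite connected graph viewed as a directed graph (each undirected edge replaced by two opposite directed edges). Suppose for every ordered pair of vertices (v, w) there is a flow f_{vw} on the directed edges sending one unit of flow from v to w (f_{vw} is nonnegative on directed edges and satisfies flow conservation: net outflow 1 at v, net inflow 1 at w, net flow 0 at all other vertices). If the total flow F = Σ_{v,w ∈ V} f_{vw} satisfies F(e) ≤ μ on every directed edge e, then for every nonempty X ⊆ V with |X| ≤ |V|/2 one has |δ(X)|/|X| ≥ |V|/(2μ); in particular, if μ ≤ |V|/2 then the edge expansion χ(G) ≥ 1. -/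
/-- The multicommodity-flow bound on edge expansion: if `G` is a finite connected graph
and for every ordered pair of vertices `(v, w)` there is a unit flow `f v w` from `v` to
`w` supported on the directed edges of `G` (nonnegative, with net outflow `1` at `v`,
net inflow `1` at `w` and conservation elsewhere), and the total flow
`F(e) = ∑ v w, f v w e` on every directed edge is at most `μ`, then every nonempty
`X ⊆ V` with `|X| ≤ |V|/2` satisfies `|δ(X)|/|X| ≥ |V|/(2μ)`; in particular, if
`μ ≤ |V|/2`, the edge expansion of `G` is at least 1. -/
theorem edge_expansion_of_flow
    {V : Type*} [Fintype V] [DecidableEq V] (G : SimpleGraph V) (hG : G.Connected)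
    (f : V → V → V → V → ℝ) (μ : ℝ)
    (hsupp : ∀ v w a b, ¬ G.Adj a b → f v w a b = 0)
    (hnonneg : ∀ v w a b, 0 ≤ f v w a b)
    (hflow : ∀ v w u, (∑ b, f v w u b) - (∑ a, f v w a u) =
      (if u = v then (1 : ℝ) else 0) - (if u = w then (1 : ℝ) else 0))
    (hμ : ∀ a b, G.Adj a b → (∑ v, ∑ w, f v w a b) ≤ μ) :
    ∀ X : Set V, X.Nonempty → 2 * X.ncard ≤ Fintype.card V →
      (((edgeBoundary G X).ncard : ℝ) / X.ncard ≥ (Fintype.card V : ℝ) / (2 * μ)) ∧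
      (μ ≤ (Fintype.card V : ℝ) / 2 → X.ncard ≤ (edgeBoundary G X).ncard) := by
  classical
  intro X hX hX2
  set Xf : Finset V := X.toFinset with hXfdef
  have hmemX : ∀ a, a ∈ Xf ↔ a ∈ X := fun a => Set.mem_toFinset
  have hXcard : X.ncard = Xf.card := Set.ncard_eq_toFinset_card' X
  -- per-pair cut identity
  have key : ∀ v w : V,
      (∑ a ∈ Xf, ∑ b ∈ Xfᶜ, f v w a b) - (∑ a ∈ Xf, ∑ b ∈ Xfᶜ, f v w b a)
        = (if v ∈ Xf then (1:ℝ) else 0) - (if w ∈ Xf then (1:ℝ) else 0) := by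
    intro v w
    have h1 : ∑ u ∈ Xf, ((∑ b, f v w u b) - (∑ a, f v w a u))
        = (if v ∈ Xf then (1:ℝ) else 0) - (if w ∈ Xf then (1:ℝ) else 0) := by
      rw [Finset.sum_congr rfl (fun u _ => hflow v w u), Finset.sum_sub_distrib]
      congr 1 <;> simp [Finset.sum_ite_eq]
    have expand : ∀ g : V → V → ℝ, ∑ u ∈ Xf, ∑ b, g u b
        = (∑ u ∈ Xf, ∑ b ∈ Xf, g u b) + ∑ u ∈ Xf, ∑ b ∈ Xfᶜ, g u b := by
      intro g
      rw [← Finset.sum_add_distrib]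
      exact Finset.sum_congr rfl fun u _ => (Finset.sum_add_sum_compl Xf _).symm
    rw [← h1, Finset.sum_sub_distrib, expand (fun u b => f v w u b),
      expand (fun u a => f v w a u)]
    have hc : ∑ u ∈ Xf, ∑ b ∈ Xf, f v w u b = ∑ u ∈ Xf, ∑ b ∈ Xf, f v w b u :=
      Finset.sum_comm
    rw [hc]; ring
  -- cross-sum of each commodity with source in X and sink outside is ≥ 1
  have key2 : ∀ v w : V, v ∈ Xf → w ∉ Xf →
      (1:ℝ) ≤ ∑ a ∈ Xf, ∑ b ∈ Xfᶜ, f v w a b := by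
    intro v w hv hw
    have h := key v w
    rw [if_pos hv, if_neg hw] at h
    have hnn : 0 ≤ ∑ a ∈ Xf, ∑ b ∈ Xfᶜ, f v w b a :=
      Finset.sum_nonneg fun a _ => Finset.sum_nonneg fun b _ => hnonneg _ _ _ _
    linarith
  -- the set of crossing directed edges
  set B : Finset (V × V) := (Xf ×ˢ Xfᶜ).filter (fun p => G.Adj p.1 p.2) with hBdef
  -- the edge boundary has the same cardinality as B
  have hEB : (edgeBoundary G X).ncard = B.card := by
    have himg : edgeBoundary G X = ↑(B.image fun p => s(p.1, p.2)) := by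
      ext e
      simp only [edgeBoundary, Set.mem_setOf_eq, Finset.coe_image, Set.mem_image,
        Finset.mem_coe, hBdef, Finset.mem_filter, Finset.mem_product, Finset.mem_compl]
      constructor
      · rintro ⟨he, v, w, rfl, hv, hw⟩
        exact ⟨(v, w), ⟨⟨(hmemX v).2 hv, fun h => hw ((hmemX w).1 h)⟩,
          (G.mem_edgeSet).1 he⟩, rfl⟩
      · rintro ⟨⟨a, b⟩, ⟨⟨ha, hb⟩, hadj⟩, rfl⟩
        exact ⟨(G.mem_edgeSet).2 hadj, a, b, rfl, (hmemX a).1 ha,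
          fun h => hb ((hmemX b).2 h)⟩
    rw [himg, Set.ncard_coe_finset]
    apply Finset.card_image_of_injOn
    rintro ⟨a, b⟩ hab ⟨a', b'⟩ hab' heq
    rw [Finset.mem_coe, hBdef, Finset.mem_filter, Finset.mem_product,
      Finset.mem_compl] at hab hab'
    rcases Sym2.eq_iff.1 heq with ⟨rfl, rfl⟩ | ⟨rfl, rfl⟩
    · rfl
    · exact absurd hab.1.1 hab'.1.2
  -- lower bound on the total cross flow
  have ineq1 : (Xf.card : ℝ) * (Xfᶜ.card : ℝ) ≤
      ∑ a ∈ Xf, ∑ b ∈ Xfᶜ, ∑ v, ∑ w, f v w a b := by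
    have sp : ∀ g : V → V → ℝ, ∑ a ∈ Xf, ∑ b ∈ Xfᶜ, g a b
        = ∑ p ∈ Xf ×ˢ Xfᶜ, g p.1 p.2 := fun g => (Finset.sum_product' ..).symm
    have swap : ∑ a ∈ Xf, ∑ b ∈ Xfᶜ, ∑ v ∈ Xf, ∑ w ∈ Xfᶜ, f v w a b
        = ∑ v ∈ Xf, ∑ w ∈ Xfᶜ, ∑ a ∈ Xf, ∑ b ∈ Xfᶜ, f v w a b := by
      rw [sp (fun a b => ∑ v ∈ Xf, ∑ w ∈ Xfᶜ, f v w a b),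
        sp (fun v w => ∑ a ∈ Xf, ∑ b ∈ Xfᶜ, f v w a b)]
      have h1 : ∀ p : V × V, ∑ v ∈ Xf, ∑ w ∈ Xfᶜ, f v w p.1 p.2
          = ∑ q ∈ Xf ×ˢ Xfᶜ, f q.1 q.2 p.1 p.2 :=
        fun p => (Finset.sum_product' ..).symm
      simp_rw [h1]
      have h2 : ∀ q : V × V, ∑ a ∈ Xf, ∑ b ∈ Xfᶜ, f q.1 q.2 a b
          = ∑ p ∈ Xf ×ˢ Xfᶜ, f q.1 q.2 p.1 p.2 :=
        fun q => (Finset.sum_product' ..).symm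
      simp_rw [h2]
      exact Finset.sum_comm
    calc (Xf.card : ℝ) * (Xfᶜ.card : ℝ)
        = ∑ _v ∈ Xf, ∑ _w ∈ Xfᶜ, (1:ℝ) := by simp [mul_comm]
      _ ≤ ∑ v ∈ Xf, ∑ w ∈ Xfᶜ, ∑ a ∈ Xf, ∑ b ∈ Xfᶜ, f v w a b := by
          refine Finset.sum_le_sum fun v hv => Finset.sum_le_sum fun w hw => ?_
          exact key2 v w hv (Finset.mem_compl.1 hw)
      _ = ∑ a ∈ Xf, ∑ b ∈ Xfᶜ, ∑ v ∈ Xf, ∑ w ∈ Xfᶜ, f v w a b := swap.symm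
      _ ≤ ∑ a ∈ Xf, ∑ b ∈ Xfᶜ, ∑ v, ∑ w, f v w a b := by
          refine Finset.sum_le_sum fun a _ => Finset.sum_le_sum fun b _ => ?_
          refine Finset.sum_le_sum_of_subset_of_nonneg (Finset.subset_univ Xf)
            (fun v _ _ => Finset.sum_nonneg fun w _ => hnonneg _ _ _ _) |>.trans' ?_
          refine Finset.sum_le_sum fun v _ => ?_
          exact Finset.sum_le_sum_of_subset_of_nonneg (Finset.subset_univ Xfᶜ)
            (fun w _ _ => hnonneg _ _ _ _)
  -- upper bound on the total cross flow
  have ineq2 : ∑ a ∈ Xf, ∑ b ∈ Xfᶜ, ∑ v, ∑ w, f v w a b ≤ μ * B.card := by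
    have hsplit : ∑ a ∈ Xf, ∑ b ∈ Xfᶜ, ∑ v, ∑ w, f v w a b
        = ∑ p ∈ Xf ×ˢ Xfᶜ, ∑ v, ∑ w, f v w p.1 p.2 :=
      (Finset.sum_product' (f := fun a b => ∑ v, ∑ w, f v w a b) ..).symm
    rw [hsplit, ← Finset.sum_filter_add_sum_filter_not (Xf ×ˢ Xfᶜ)
      (fun p => G.Adj p.1 p.2)]
    have hzero : ∑ p ∈ (Xf ×ˢ Xfᶜ).filter (fun p => ¬ G.Adj p.1 p.2),
        ∑ v, ∑ w, f v w p.1 p.2 = 0 := by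
      refine Finset.sum_eq_zero fun p hp => ?_
      rw [Finset.mem_filter] at hp
      exact Finset.sum_eq_zero fun v _ => Finset.sum_eq_zero fun w _ =>
        hsupp v w p.1 p.2 hp.2
    rw [hzero, add_zero]
    calc ∑ p ∈ B, ∑ v, ∑ w, f v w p.1 p.2 ≤ ∑ _p ∈ B, μ := by
          refine Finset.sum_le_sum fun p hp => ?_
          rw [hBdef, Finset.mem_filter] at hp
          exact hμ p.1 p.2 hp.2
      _ = μ * B.card := by rw [Finset.sum_const, nsmul_eq_mul, mul_comm]
  have hmain : (Xf.card : ℝ) * (Xfᶜ.card : ℝ) ≤ μ * B.card := ineq1.trans ineq2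
  -- basic cardinality facts
  have hXf1 : 1 ≤ Xf.card := Finset.card_pos.2 ((Set.toFinset_nonempty).2 hX)
  have hX2' : 2 * Xf.card ≤ Fintype.card V := by rwa [hXcard] at hX2
  have hcompl : Xfᶜ.card = Fintype.card V - Xf.card := Finset.card_compl Xf
  have hXfle : Xf.card ≤ Fintype.card V := Finset.card_le_univ Xf
  have hcomplR : (Xfᶜ.card : ℝ) = (Fintype.card V : ℝ) - Xf.card := by
    rw [hcompl, Nat.cast_sub hXfle]
  have hX2R : 2 * (Xf.card : ℝ) ≤ (Fintype.card V : ℝ) := by exact_mod_cast hX2'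
  have hXf1R : (1:ℝ) ≤ (Xf.card : ℝ) := by exact_mod_cast hXf1
  -- positivity of μ
  have hμpos : 0 < μ := by
    obtain ⟨v, hv⟩ := hX
    have hXfc : Xfᶜ.Nonempty := by
      rw [← Finset.card_pos, hcompl]; omega
    obtain ⟨w, hw⟩ := hXfc
    have h1 := key2 v w ((hmemX v).2 hv) (Finset.mem_compl.1 hw)
    by_contra hcon
    push_neg at hcon
    have hall : ∀ a b, f v w a b = 0 := by
      intro a b
      by_cases hadj : G.Adj a b
      · have h2 := hμ a b hadj
        have hterm : f v w a b ≤ ∑ v', ∑ w', f v' w' a b := by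
          calc f v w a b ≤ ∑ w', f v w' a b :=
                Finset.single_le_sum (fun w' _ => hnonneg v w' a b)
                  (Finset.mem_univ w)
            _ ≤ ∑ v', ∑ w', f v' w' a b :=
                Finset.single_le_sum
                  (fun v' _ => Finset.sum_nonneg fun w' _ => hnonneg v' w' a b)
                  (Finset.mem_univ v)
        have := hnonneg v w a b
        linarith
      · exact hsupp v w a b hadj
    simp only [hall, Finset.sum_const_zero] at h1
    linarith
  have hBR : (Xf.card : ℝ) * ((Fintype.card V : ℝ) - Xf.card) ≤ μ * B.card := by
    rwa [hcomplR] at hmain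
  have hXfposR : (0:ℝ) < (Xf.card : ℝ) := by linarith
  constructor
  · rw [hXcard, hEB, ge_iff_le, div_le_div_iff₀ (by positivity) hXfposR]
    nlinarith [hBR, hXfposR, hX2R]
  · intro hμn
    have h1 : (Xf.card : ℝ) ≤ (B.card : ℝ) := by
      nlinarith [hBR, hXfposR, hX2R, hμpos]
    rw [hXcard, hEB]
    exact_mod_cast h1
end

section
/- Let K = (V, 𝒞) be an abstract cubical complex with V finite, and let e ∈ 𝒞 be a 1-dimensional cube (an edge). Let C_e = {c ∈ 𝒞 : e ⊆ c} be the set of cubes of the complex that contain e. Then |C_e| ≤ |V|/2. -/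
/-- A face containing a vertex and its antipode is the whole cube. -/
lemma face_antipode {d : ℕ} {s : Set (Fin d → Bool)} (hs : IsCubeFace s)
    {x : Fin d → Bool} (hx : x ∈ s) (hx' : (fun j => !x j) ∈ s) : s = Set.univ := by
  obtain ⟨S, a, rfl⟩ := hs
  ext y
  simp only [Set.mem_setOf_eq, Set.mem_univ, iff_true]
  intro j hj
  have h1 : x j = a j := hx j hj
  have h2 : (!(x j)) = a j := hx' j hj
  rw [h1] at h2
  cases a j <;> simp_all

/-- `w` is an antipode of `p` in the cube `c` of the complex `K`:
`w ∈ c` and the only cube of `K` inside `c` containing both `p` and `w` is `c`. -/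
def AntipOf {V : Type*} (K : AbstractCubicalComplex V) (c : Set V) (p w : V) : Prop :=
  w ∈ c ∧ ∀ c' ∈ K.cubes, c' ⊆ c → p ∈ c' → w ∈ c' → c' = c

lemma antip_exists {V : Type*} (K : AbstractCubicalComplex V) {c : Set V}
    (hc : c ∈ K.cubes) {p : V} (hp : p ∈ c) : ∃ w, AntipOf K c p w := by
  obtain ⟨d, φ, hinj, hrange, hface⟩ := K.cube_structure c hc
  rw [← hrange] at hp
  obtain ⟨x, hx⟩ := hp
  refine ⟨φ (fun j => !x j), ?_, ?_⟩
  · rw [← hrange]; exact Set.mem_range_self _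
  · intro c' hc' hsub hpc' hwc'
    have hsub' : c' ⊆ Set.range φ := hrange ▸ hsub
    have himg : φ '' (φ ⁻¹' c') = c' := Set.image_preimage_eq_of_subset hsub'
    have hfc : IsCubeFace (φ ⁻¹' c') := (hface _).mp (by rw [himg]; exact hc')
    have hxin : x ∈ φ ⁻¹' c' := by simp [Set.mem_preimage, hx, hpc']
    have hxin' : (fun j => !x j) ∈ φ ⁻¹' c' := hwc'
    have huniv := face_antipode hfc hxin hxin'
    rw [← himg, huniv, Set.image_univ, hrange]

/-- In coordinates, an antipode of `p` must be the coordinatewise flip. -/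
lemma antip_coord {V : Type*} (K : AbstractCubicalComplex V) {c : Set V}
    {d : ℕ} {φ : (Fin d → Bool) → V} (hinj : Function.Injective φ)
    (hrange : Set.range φ = c)
    (hface : ∀ s : Set (Fin d → Bool), φ '' s ∈ K.cubes ↔ IsCubeFace s)
    {p w : V} {x y : Fin d → Bool} (hw : AntipOf K c p w)
    (hx : φ x = p) (hy : φ y = w) : y = fun j => !x j := by
  set s : Set (Fin d → Bool) := {z | ∀ j ∈ {j | x j = y j}, z j = x j} with hs
  have hsf : IsCubeFace s := ⟨_, x, rfl⟩
  have hmem : φ '' s ∈ K.cubes := (hface s).mpr hsf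
  have hsub : φ '' s ⊆ c := by rw [← hrange]; exact Set.image_subset_range _ _
  have hps : p ∈ φ '' s := ⟨x, fun j _ => rfl, hx⟩
  have hws : w ∈ φ '' s := ⟨y, fun j hj => hj.symm, hy⟩
  have hceq : φ '' s = c := hw.2 _ hmem hsub hps hws
  have hsuniv : s = Set.univ := by
    have : φ '' s = φ '' Set.univ := by rw [hceq, Set.image_univ, hrange]
    exact (Set.image_injective.mpr hinj) this
  funext j
  by_cases hj : x j = y j
  · exfalso
    have : (fun j => !x j) ∈ s := hsuniv ▸ Set.mem_univ _
    have h2 : (!(x j)) = x j := this j hj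
    cases x j <;> simp_all
  · cases hxj : x j <;> cases hyj : y j <;> simp_all

lemma antip_inj {V : Type*} (K : AbstractCubicalComplex V) {c : Set V}
    (hc : c ∈ K.cubes) {p q w : V} (hp : p ∈ c) (hq : q ∈ c)
    (hwp : AntipOf K c p w) (hwq : AntipOf K c q w) : p = q := by
  obtain ⟨d, φ, hinj, hrange, hface⟩ := K.cube_structure c hc
  obtain ⟨x, hx⟩ : p ∈ Set.range φ := hrange ▸ hp
  obtain ⟨x', hx'⟩ : q ∈ Set.range φ := hrange ▸ hq
  obtain ⟨y, hy⟩ : w ∈ Set.range φ := hrange ▸ hwp.1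
  have h1 := antip_coord K hinj hrange hface hwp hx hy
  have h2 := antip_coord K hinj hrange hface hwq hx' hy
  have : x = x' := by
    funext j
    have e1 : y j = !x j := by rw [h1]
    have e2 : y j = !x' j := by rw [h2]
    rw [e1] at e2
    cases hxj : x j <;> cases hxj' : x' j <;> simp_all
  rw [← hx, ← hx', this]

/-- Lemma 2 of the paper: if `e` is a 1-dimensional cube (an edge) of an abstract
cubical complex on a finite vertex set `V`, then the number of cubes of the complex
containing `e` is at most `|V|/2`. -/
theorem card_cubes_containing_edge_le
    {V : Type*} [Fintype V] (K : AbstractCubicalComplex V)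
    (e : Set V) (he : e ∈ K.cubes) (he2 : e.ncard = 2) :
    2 * {c ∈ K.cubes | e ⊆ c}.ncard ≤ Fintype.card V := by
  classical
  obtain ⟨u, v, huv, rfl⟩ := Set.ncard_eq_two.mp he2
  set T : Set (Set V) := {c ∈ K.cubes | ({u, v} : Set V) ⊆ c} with hT
  -- choose antipodes
  have hsel : ∀ c : T, ∀ b : Bool,
      ∃ w, AntipOf K (c : Set V) (if b then u else v) w := by
    rintro ⟨c, hc, hec⟩ b
    apply antip_exists K hc
    have hu : u ∈ c := hec (by simp)
    have hv : v ∈ c := hec (by simp)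
    cases b <;> simp [hu, hv]
  choose F hF using hsel
  -- cross-cube: same antipode vertex forces same cube
  have cross : ∀ (c₁ c₂ : T) (p q w : V), p ∈ ({u, v} : Set V) → q ∈ ({u, v} : Set V) →
      AntipOf K (c₁ : Set V) p w → AntipOf K (c₂ : Set V) q w → (c₁ : Set V) = c₂ := by
    rintro ⟨c₁, hc₁, he₁⟩ ⟨c₂, hc₂, he₂⟩ p q w hp hq h₁ h₂
    simp only at *
    have hne : c₁ ∩ c₂ ≠ ∅ := by
      intro h
      have : u ∈ c₁ ∩ c₂ := ⟨he₁ (by simp), he₂ (by simp)⟩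
      rw [h] at this; exact this
    have hmem : c₁ ∩ c₂ ∈ K.cubes := (K.inter_closed c₁ hc₁ c₂ hc₂).resolve_left hne
    have h12 : c₁ ∩ c₂ = c₁ :=
      h₁.2 _ hmem Set.inter_subset_left ⟨he₁ hp, he₂ hp⟩ ⟨h₁.1, h₂.1⟩
    have hsub : c₁ ⊆ c₂ := by rw [← h12]; exact Set.inter_subset_right
    exact h₂.2 c₁ hc₁ hsub (he₁ hq) h₁.1
  -- the injection
  have hFinj : Function.Injective (fun cb : T × Bool => F cb.1 cb.2) := by
    rintro ⟨c₁, b₁⟩ ⟨c₂, b₂⟩ h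
    simp only at h
    have h₁ := hF c₁ b₁
    have h₂ := hF c₂ b₂
    rw [h] at h₁
    have hp₁ : (if b₁ then u else v) ∈ ({u, v} : Set V) := by cases b₁ <;> simp
    have hp₂ : (if b₂ then u else v) ∈ ({u, v} : Set V) := by cases b₂ <;> simp
    have hceq : (c₁ : Set V) = c₂ := cross c₁ c₂ _ _ _ hp₁ hp₂ h₁ h₂
    have hcc : c₁ = c₂ := Subtype.ext hceq
    subst hcc
    have hpq : (if b₁ then u else v) = (if b₂ then u else v) :=
      antip_inj K c₁.2.1 (c₁.2.2 hp₁) (c₁.2.2 hp₂) h₁ h₂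
    have hbb : b₁ = b₂ := by
      cases b₁ <;> cases b₂ <;> simp_all
    rw [hbb]
  -- counting
  have hcard : Nat.card (T × Bool) ≤ Nat.card V :=
    Nat.card_le_card_of_injective _ hFinj
  rw [Nat.card_prod, Nat.card_eq_fintype_card] at hcard
  simp only [Nat.card_eq_fintype_card, Fintype.card_bool] at hcard
  have hTn : T.ncard = Fintype.card T := by
    rw [← Nat.card_coe_set_eq, Nat.card_eq_fintype_card]
  omega
end

section
/- Let d ≥ 1 and consider the hypercube graph Q_d on vertex set {0,1}^d (vertices adjacent iff they differ in exactly one coordinate). For vertices v, w and a directed edge e of Q_d, let N(v, w; e) denote the number of shortest paths from v to w in Q_d that traverse the directed edge e. For v ∈ {0,1}^d let v̄ denote its antipode (coordinatewise complement). Then for every directed edge e of Q_d, Σ_{v ∈ {0,1}^d} N(v, v̄; e) = d!. Equivalently, if for each ordered antipodal pair (v, v̄) one unit of flow is distributed equally over all d! shortest paths from v to v̄, the total flow on every directed edge of Q_d equals 1. -/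
/-- The hypercube graph `Q_d` on vertex set `{0,1}^d`: two vertices are adjacent iff
they differ in exactly one coordinate. -/
def cubeGraph (d : ℕ) : SimpleGraph (Fin d → Bool) where
  Adj x y := hammingDist x y = 1
  symm := by
    constructor
    intro x y h
    rwa [hammingDist_comm]
  loopless := by
    constructor
    intro x h
    simp [hammingDist_self] at h

/-!
A geodesic from `v` to its antipode flips every coordinate exactly once, so it is encoded by the
order in which it flips them, a permutation of `Fin d`; conversely every permutation, started
anywhere, traces such a geodesic. Let the directed edge `(x, y)` flip coordinate `i`. The geodesic
with flip order `σ` passes through `(x, y)` exactly when its start is `x` with the coordinates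
preceding `i` in `σ` flipped back. So each of the `d!` flip orders is counted for exactly one
starting vertex.
-/

lemma List.card_le_length_of_forall_mem {α : Type*} [Fintype α] {l : List α} (h : ∀ a, a ∈ l) :
    Fintype.card α ≤ l.length := by
  classical
  rw [← Finset.card_univ, ← Finset.eq_univ_of_forall (s := l.toFinset) (by simpa using h)]
  exact List.toFinset_card_le l

lemma List.perm_finRange_of_forall_mem {d : ℕ} {l : List (Fin d)} (h : ∀ j, j ∈ l)
    (hl : l.length = d) : l.Perm (List.finRange d) := by
  have htoFinset : l.toFinset = Finset.univ := Finset.eq_univ_of_forall (by simpa using h)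
  have hnodup : l.Nodup := Multiset.coe_nodup.mp <|
    Multiset.toFinset_card_eq_card_iff_nodup.mp (by simpa [htoFinset] using hl.symm)
  exact List.perm_of_nodup_nodup_toFinset_eq hnodup (List.nodup_finRange d) (by
    simp [htoFinset])

open SimpleGraph Finset

namespace Hypercube

section Flips

variable {ι : Type*} [DecidableEq ι]

def flipAt (v : ι → Bool) (j : ι) : ι → Bool := Function.update v j (!v j)

@[simp] lemma flipAt_apply_self (v : ι → Bool) (j : ι) : flipAt v j j = !v j :=
  Function.update_self ..

lemma flipAt_apply_of_ne (v : ι → Bool) {j k : ι} (h : k ≠ j) : flipAt v j k = v k :=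
  Function.update_of_ne h ..

lemma flipAt_injective (v : ι → Bool) : Function.Injective (flipAt v) := by
  intro j k h
  by_contra hjk
  have hj := congrFun h j
  rw [flipAt_apply_self, flipAt_apply_of_ne v hjk] at hj
  exact Bool.not_ne_self _ hj

def flipAlong (v : ι → Bool) (l : List ι) : ι → Bool := l.foldl flipAt v

@[simp] lemma flipAlong_nil (v : ι → Bool) : flipAlong v [] = v := rfl

@[simp] lemma flipAlong_cons (v : ι → Bool) (j : ι) (l : List ι) :
    flipAlong v (j :: l) = flipAlong (flipAt v j) l := rfl

lemma flipAlong_apply (v : ι → Bool) (l : List ι) (k : ι) :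
    flipAlong v l k = xor (v k) (decide (Odd (l.count k))) := by
  induction l generalizing v with
  | nil => simp
  | cons j l ih =>
    rw [flipAlong_cons, ih]
    rcases eq_or_ne k j with rfl | hkj
    · simp only [flipAt_apply_self, List.count_cons_self, Nat.odd_add_one, decide_not]
      cases v k <;> simp
    · simp [flipAt_apply_of_ne v hkj, List.count_cons_of_ne hkj.symm]

lemma flipAlong_flipAlong (v : ι → Bool) (l : List ι) : flipAlong (flipAlong v l) l = v := by
  funext k
  simp only [flipAlong_apply, Bool.xor_assoc, Bool.xor_self, Bool.xor_false]

lemma flipAlong_eq_compl_iff {v : ι → Bool} {l : List ι} :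
    flipAlong v l = (fun k => !(v k)) ↔ ∀ k, Odd (l.count k) := by
  simp only [funext_iff, flipAlong_apply]
  refine forall_congr' fun k => ?_
  cases v k <;> simp

/-- The vertex `v` such that the walk from `v` along `l` flips coordinate `i` while standing at
`x`; meaningful only when `i` occurs in `l` exactly once. -/
def crossingStart (x : ι → Bool) (i : ι) (l : List ι) : ι → Bool :=
  flipAlong x (l.takeWhile (· != i))

lemma crossingStart_of_nodup {x : ι → Bool} {i : ι} {t u : List ι} (h : (t ++ i :: u).Nodup) :
    crossingStart x i (t ++ i :: u) = flipAlong x t := by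
  have hit : ∀ j ∈ t, j ≠ i := fun j hj hji =>
    (List.nodup_append.mp h).2.2 j hj i List.mem_cons_self hji
  rw [crossingStart, List.takeWhile_append_of_pos (by simpa using hit)]
  simp

end Flips

variable {d : ℕ}

lemma cubeGraph_adj_flipAt (v : Fin d → Bool) (j : Fin d) :
    (cubeGraph d).Adj v (flipAt v j) := by
  change hammingDist v (flipAt v j) = 1
  rw [hammingDist, Finset.card_eq_one]
  refine ⟨j, Finset.ext fun k => ?_⟩
  rcases eq_or_ne k j with rfl | hkj <;> simp [flipAt_apply_of_ne, *]

lemma exists_flipAt_eq_of_adj {a b : Fin d → Bool} (h : (cubeGraph d).Adj a b) :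
    ∃ j, flipAt a j = b := by
  obtain ⟨j, hj⟩ := Finset.card_eq_one.mp h
  have hdiff : ∀ k, a k ≠ b k ↔ k = j := fun k => by simpa using Finset.ext_iff.mp hj k
  refine ⟨j, funext fun k => ?_⟩
  rcases eq_or_ne k j with rfl | hkj
  · have hne := (hdiff k).mpr rfl
    rw [flipAt_apply_self]
    revert hne
    cases a k <;> cases b k <;> simp
  · rw [flipAt_apply_of_ne a hkj]
    exact not_not.mp (mt (hdiff k).mp hkj)

noncomputable def adjCoord {a b : Fin d → Bool} (h : (cubeGraph d).Adj a b) : Fin d :=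
  (exists_flipAt_eq_of_adj h).choose

lemma flipAt_adjCoord {a b : Fin d → Bool} (h : (cubeGraph d).Adj a b) :
    flipAt a (adjCoord h) = b :=
  (exists_flipAt_eq_of_adj h).choose_spec

lemma adjCoord_flipAt (v : Fin d → Bool) (j : Fin d) : adjCoord (cubeGraph_adj_flipAt v j) = j :=
  flipAt_injective v (flipAt_adjCoord _)

noncomputable def walkCoords {a b : Fin d → Bool} (p : (cubeGraph d).Walk a b) : List (Fin d) :=
  p.darts.map fun D => adjCoord D.adj

section Walks

variable {a b : Fin d → Bool}

@[simp] lemma walkCoords_nil : walkCoords (Walk.nil : (cubeGraph d).Walk a a) = [] := rfl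

@[simp] lemma walkCoords_cons {c : Fin d → Bool} (h : (cubeGraph d).Adj a c)
    (p : (cubeGraph d).Walk c b) : walkCoords (.cons h p) = adjCoord h :: walkCoords p := rfl

@[simp] lemma walkCoords_copy {a' b' : Fin d → Bool} (p : (cubeGraph d).Walk a b) (ha : a = a')
    (hb : b = b') : walkCoords (p.copy ha hb) = walkCoords p := by
  subst ha hb; rfl

@[simp] lemma length_walkCoords (p : (cubeGraph d).Walk a b) :
    (walkCoords p).length = p.length := by
  simp [walkCoords]

lemma flipAlong_walkCoords (p : (cubeGraph d).Walk a b) : flipAlong a (walkCoords p) = b := by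
  induction p with
  | nil => rfl
  | cons h p ih => rw [walkCoords_cons, flipAlong_cons, flipAt_adjCoord, ih]

lemma walkCoords_injective :
    Function.Injective (walkCoords : (cubeGraph d).Walk a b → List (Fin d)) := by
  intro p q hpq
  induction p with
  | nil => cases q with
    | nil => rfl
    | cons => simp at hpq
  | cons h p ih => cases q with
    | nil => simp at hpq
    | cons h' q =>
      rw [walkCoords_cons, walkCoords_cons, List.cons_eq_cons] at hpq
      obtain ⟨hhead, htail⟩ := hpq
      obtain rfl := (flipAt_adjCoord h).symm.trans (hhead ▸ flipAt_adjCoord h')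
      rw [ih htail]

def walkAlong (v : Fin d → Bool) : (l : List (Fin d)) → (cubeGraph d).Walk v (flipAlong v l)
  | [] => .nil
  | j :: l => .cons (cubeGraph_adj_flipAt v j) (walkAlong (flipAt v j) l)

@[simp] lemma walkCoords_walkAlong (v : Fin d → Bool) (l : List (Fin d)) :
    walkCoords (walkAlong v l) = l := by
  induction l generalizing v with
  | nil => rfl
  | cons j l ih => simp [walkAlong, adjCoord_flipAt, ih]

lemma mem_darts_iff (p : (cubeGraph d).Walk a b) (D : (cubeGraph d).Dart) :
    D ∈ p.darts ↔ ∃ t u, walkCoords p = t ++ adjCoord D.adj :: u ∧ flipAlong a t = D.fst := by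
  induction p with
  | nil => simp
  | @cons a c b h p ih =>
    rw [Walk.darts_cons, List.mem_cons, ih, walkCoords_cons]
    constructor
    · rintro (rfl | ⟨t, u, hp, ht⟩)
      · exact ⟨[], _, rfl, rfl⟩
      · exact ⟨_ :: t, u, by rw [hp]; rfl, by rw [flipAlong_cons, flipAt_adjCoord, ht]⟩
    · rintro ⟨_ | ⟨j, t⟩, u, hp, ht⟩
      · obtain ⟨hj, -⟩ := List.cons_eq_cons.mp hp
        left
        refine Dart.ext _ _ (Prod.ext ht.symm ?_)
        calc D.snd = flipAt D.fst (adjCoord D.adj) := (flipAt_adjCoord D.adj).symm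
          _ = flipAt a (adjCoord h) := by rw [← hj, ← ht]; rfl
          _ = c := flipAt_adjCoord h
      · rw [List.cons_append, List.cons_eq_cons] at hp
        obtain ⟨rfl, hp⟩ := hp
        exact Or.inr ⟨t, u, hp, by rwa [flipAlong_cons, flipAt_adjCoord] at ht⟩

lemma mk_mem_darts_iff_crossingStart {x y : Fin d → Bool} (hxy : (cubeGraph d).Adj x y)
    (p : (cubeGraph d).Walk a b) (hnodup : (walkCoords p).Nodup)
    (hmem : adjCoord hxy ∈ walkCoords p) :
    (⟨(x, y), hxy⟩ : (cubeGraph d).Dart) ∈ p.darts ↔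
      crossingStart x (adjCoord hxy) (walkCoords p) = a := by
  rw [mem_darts_iff]
  constructor
  · rintro ⟨t, u, hp, ht⟩
    rw [hp] at hnodup ⊢
    rw [crossingStart_of_nodup hnodup, ← show flipAlong a t = x from ht, flipAlong_flipAlong]
  · obtain ⟨t, u, hp⟩ := List.append_of_mem hmem
    rw [hp] at hnodup ⊢
    rw [crossingStart_of_nodup hnodup]
    rintro rfl
    exact ⟨t, u, rfl, flipAlong_flipAlong x t⟩

end Walks

section Geodesics

variable {v : Fin d → Bool}

lemma flipAlong_eq_compl_of_perm {l : List (Fin d)} (hl : l.Perm (List.finRange d)) :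
    flipAlong v l = fun j => !(v j) :=
  flipAlong_eq_compl_iff.mpr fun j => by
    rw [hl.count_eq, List.count_eq_one_of_mem (List.nodup_finRange d) (List.mem_finRange j)]
    exact odd_one

lemma mem_walkCoords_of_compl (p : (cubeGraph d).Walk v (fun j => !(v j))) (j : Fin d) :
    j ∈ walkCoords p :=
  List.count_pos_iff.mp (flipAlong_eq_compl_iff.mp (flipAlong_walkCoords p) j).pos

lemma dist_compl (v : Fin d → Bool) : (cubeGraph d).dist v (fun j => !(v j)) = d := by
  let p := (walkAlong v (List.finRange d)).copy rfl
    (flipAlong_eq_compl_of_perm (List.Perm.refl _))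
  apply le_antisymm
  · simpa [p, ← length_walkCoords] using dist_le p
  · obtain ⟨q, hq⟩ := p.reachable.exists_walk_length_eq_dist
    rw [← hq, ← length_walkCoords]
    simpa using List.card_le_length_of_forall_mem (mem_walkCoords_of_compl q)

lemma length_eq_dist_compl_iff (p : (cubeGraph d).Walk v (fun j => !(v j))) :
    p.length = (cubeGraph d).dist v (fun j => !(v j)) ↔
      (walkCoords p).Perm (List.finRange d) := by
  rw [dist_compl, ← length_walkCoords]
  exact ⟨List.perm_finRange_of_forall_mem (mem_walkCoords_of_compl p),
    fun h => h.length_eq.trans (List.length_finRange)⟩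

lemma ncard_geodesics_compl_through_dart {x y : Fin d → Bool} (hxy : (cubeGraph d).Adj x y)
    (v : Fin d → Bool) :
    {p : (cubeGraph d).Walk v (fun j => !(v j)) |
        p.length = (cubeGraph d).dist v (fun j => !(v j)) ∧
        (⟨(x, y), hxy⟩ : (cubeGraph d).Dart) ∈ p.darts}.ncard
      = #{l ∈ (List.finRange d).permutations.toFinset | crossingStart x (adjCoord hxy) l = v} := by
  have hcross : ∀ p : (cubeGraph d).Walk v (fun j => !(v j)),
      (walkCoords p).Perm (List.finRange d) →
        ((⟨(x, y), hxy⟩ : (cubeGraph d).Dart) ∈ p.darts ↔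
          crossingStart x (adjCoord hxy) (walkCoords p) = v) := fun p hp =>
    mk_mem_darts_iff_crossingStart hxy p (hp.nodup_iff.mpr (List.nodup_finRange d))
      (hp.mem_iff.mpr (List.mem_finRange _))
  rw [← Set.ncard_coe_finset]
  refine Set.BijOn.ncard_eq ⟨?_, walkCoords_injective.injOn, ?_⟩
  · rintro p ⟨hlen, hdart⟩
    have hp := (length_eq_dist_compl_iff p).mp hlen
    simpa [hp] using (hcross p hp).mp hdart
  · intro l hl
    simp only [coe_filter, List.mem_toFinset, List.mem_permutations] at hl
    obtain ⟨hperm, hstart⟩ := hl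
    let p := (walkAlong v l).copy rfl (flipAlong_eq_compl_of_perm hperm)
    have hcoords : walkCoords p = l := by simp [p]
    refine ⟨p, ⟨?_, ?_⟩, hcoords⟩
    · rwa [length_eq_dist_compl_iff, hcoords]
    · rwa [hcross p (hcoords ▸ hperm), hcoords]

end Geodesics

end Hypercube

open Hypercube

theorem sum_antipodal_shortest_paths_through_edge_general
    (d : ℕ) (x y : Fin d → Bool) (hxy : (cubeGraph d).Adj x y) :
    ∑ v : Fin d → Bool,
      {p : (cubeGraph d).Walk v (fun j => !(v j)) |
        p.length = (cubeGraph d).dist v (fun j => !(v j)) ∧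
        (⟨(x, y), hxy⟩ : (cubeGraph d).Dart) ∈ p.darts}.ncard
      = Nat.factorial d := by
  set perms := (List.finRange d).permutations.toFinset
  calc _ = ∑ v, #{l ∈ perms | crossingStart x (adjCoord hxy) l = v} :=
        Finset.sum_congr rfl fun v _ => ncard_geodesics_compl_through_dart hxy v
    _ = #perms := (card_eq_sum_card_fiberwise fun _ _ => mem_univ _).symm
    _ = d.factorial := by
      rw [List.toFinset_card_of_nodup (List.nodup_permutations _ (List.nodup_finRange d)),
        List.length_permutations, List.length_finRange]

/-- For every directed edge `(x, y)` of the hypercube graph `Q_d` (`d ≥ 1`), the number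
of shortest paths from `v` to its antipode `v̄` traversing `(x, y)`, summed over all
vertices `v`, equals `d!`.  Equivalently, distributing one unit of flow equally over all
`d!` shortest paths from `v` to `v̄`, for every ordered antipodal pair `(v, v̄)`, yields
total flow exactly `1` on every directed edge. -/
theorem sum_antipodal_shortest_paths_through_edge
    (d : ℕ) (hd : 1 ≤ d) (x y : Fin d → Bool) (hxy : (cubeGraph d).Adj x y) :
    ∑ v : Fin d → Bool,
      {p : (cubeGraph d).Walk v (fun j => !(v j)) |
        p.length = (cubeGraph d).dist v (fun j => !(v j)) ∧
        (⟨(x, y), hxy⟩ : (cubeGraph d).Dart) ∈ p.darts}.ncard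
      = Nat.factorial d :=
  sum_antipodal_shortest_paths_through_edge_general d x y hxy
end

section
/- For every d ≥ 0, the hypercube graph Q_d on {0,1}^d has edge expansion at least 1: for every nonempty subset S ⊆ {0,1}^d with |S| ≤ 2^{d−1}, the number of edges of Q_d with exactly one endpoint in S is at least |S|. -/
open Finset

namespace SimpleGraph

variable {V : Type*} (G : SimpleGraph V) [Fintype V] [DecidableRel G.Adj] [DecidableEq V]

def boundaryPairs (A : Finset V) : Finset (V × V) :=
  {p | G.Adj p.1 p.2 ∧ p.1 ∈ A ∧ p.2 ∉ A}

variable {G} in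
@[simp]
lemma mem_boundaryPairs {A : Finset V} {p : V × V} :
    p ∈ G.boundaryPairs A ↔ G.Adj p.1 p.2 ∧ p.1 ∈ A ∧ p.2 ∉ A := by
  simp [boundaryPairs]

lemma edgeBoundary_coe (A : Finset V) :
    edgeBoundary G ↑A = (fun p : V × V => s(p.1, p.2)) '' ↑(G.boundaryPairs A) := by
  ext e
  constructor
  · rintro ⟨he, v, w, rfl, hv, hw⟩
    exact ⟨(v, w), mem_boundaryPairs.2 ⟨he, hv, hw⟩, rfl⟩
  · rintro ⟨⟨v, w⟩, hp, rfl⟩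
    obtain ⟨hadj, hv, hw⟩ := mem_boundaryPairs.1 hp
    exact ⟨hadj, v, w, rfl, hv, hw⟩

lemma ncard_edgeBoundary_coe (A : Finset V) :
    (edgeBoundary G ↑A).ncard = #(G.boundaryPairs A) := by
  rw [edgeBoundary_coe, Set.InjOn.ncard_image, Set.ncard_coe_finset]
  rintro ⟨v, w⟩ hvw ⟨v', w'⟩ hvw' h
  simp only [mem_coe, mem_boundaryPairs] at hvw hvw'
  rcases Sym2.eq_iff.1 h with ⟨rfl, rfl⟩ | ⟨rfl, rfl⟩
  · rfl
  · exact absurd hvw.2.1 hvw'.2.2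

end SimpleGraph

instance (d : ℕ) : DecidableRel (cubeGraph d).Adj :=
  fun x y => inferInstanceAs (Decidable (hammingDist x y = 1))

lemma hammingDist_cons {n : ℕ} {β : Type*} [DecidableEq β] (a b : β) (x y : Fin n → β) :
    hammingDist (Fin.cons a x : Fin (n + 1) → β) (Fin.cons b y) =
      (if a = b then 0 else 1) + hammingDist x y := by
  simp only [hammingDist, card_filter, Fin.sum_univ_succ, Fin.cons_zero, Fin.cons_succ, ne_eq]
  split_ifs <;> rfl

lemma cubeGraph_adj_cons {d : ℕ} {a b : Bool} {x y : Fin d → Bool} :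
    (cubeGraph (d + 1)).Adj (Fin.cons a x) (Fin.cons b y) ↔
      a = b ∧ (cubeGraph d).Adj x y ∨ a ≠ b ∧ x = y := by
  change hammingDist _ _ = 1 ↔ a = b ∧ hammingDist x y = 1 ∨ _
  rw [hammingDist_cons, ← hammingDist_eq_zero]
  by_cases h : a = b <;> simp [h]

section consFiber

variable {n : ℕ} {α : Type*} [Fintype α]

lemma sum_univ_fun_fin_succ {M : Type*} [AddCommMonoid M] (f : (Fin (n + 1) → α) → M) :
    ∑ x, f x = ∑ a, ∑ y, f (Fin.cons a y) := by
  rw [← (Fin.consEquiv fun _ => α).sum_comp, Fintype.sum_prod_type]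
  rfl

variable [DecidableEq α]

def consFiber (A : Finset (Fin (n + 1) → α)) (a : α) : Finset (Fin n → α) :=
  {y | Fin.cons a y ∈ A}

@[simp]
lemma mem_consFiber {A : Finset (Fin (n + 1) → α)} {a : α} {y : Fin n → α} :
    y ∈ consFiber A a ↔ Fin.cons a y ∈ A := by
  simp [consFiber]

lemma card_eq_sum_card_consFiber (A : Finset (Fin (n + 1) → α)) :
    #A = ∑ a, #(consFiber A a) := by
  calc #A = ∑ x, if x ∈ A then 1 else 0 := by simp
    _ = ∑ a, #(consFiber A a) := by simp only [sum_univ_fun_fin_succ, consFiber, card_filter]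

end consFiber

lemma card_boundaryPairs_cubeGraph_succ {d : ℕ} (A : Finset (Fin (d + 1) → Bool)) :
    #((cubeGraph (d + 1)).boundaryPairs A) =
      #((cubeGraph d).boundaryPairs (consFiber A false)) +
      #((cubeGraph d).boundaryPairs (consFiber A true)) +
      #(consFiber A false \ consFiber A true) + #(consFiber A true \ consFiber A false) := by
  have card_sdiff_eq_sum (s t : Finset (Fin d → Bool)) :
      #(s \ t) = ∑ y, if y ∈ s then if y ∈ t then 0 else 1 else 0 := by
    rw [← filter_univ_mem (s \ t), card_filter]
    simp only [mem_sdiff, ite_and, ite_not]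
  simp only [SimpleGraph.boundaryPairs, card_filter, Fintype.sum_prod_type,
    sum_univ_fun_fin_succ (n := d), cubeGraph_adj_cons]
  rw [Fintype.sum_bool]
  simp only [sum_comm (γ := Bool), Fintype.sum_bool]
  simp only [true_and, ne_eq, not_true_eq_false, false_and, or_false, ite_and, ite_not,
    Bool.true_eq_false, not_false_eq_true, false_or, sum_add_distrib, sum_ite_eq, mem_univ,
    ↓reduceIte, Bool.false_eq_true, mem_consFiber, card_sdiff_eq_sum]
  ring

lemma min_card_le_card_boundaryPairs_cubeGraph {d : ℕ} (A : Finset (Fin d → Bool)) :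
    min #A (2 ^ d - #A) ≤ #((cubeGraph d).boundaryPairs A) := by
  induction d with
  | zero =>
    have : #A ≤ 1 := by simpa using card_le_univ A
    omega
  | succ d ih =>
    rw [card_boundaryPairs_cubeGraph_succ, card_eq_sum_card_consFiber, Fintype.sum_bool, pow_succ]
    set A₀ := consFiber A false
    set A₁ := consFiber A true
    have hA₀ : #A₀ ≤ 2 ^ d := by simpa using card_le_univ A₀
    have hA₁ : #A₁ ≤ 2 ^ d := by simpa using card_le_univ A₁
    have ih₀ := ih A₀
    have ih₁ := ih A₁
    have h₀₁ := le_card_sdiff A₁ A₀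
    have h₁₀ := le_card_sdiff A₀ A₁
    omega

theorem cubeGraph_edge_expansion_general
    (d : ℕ) (S : Set (Fin d → Bool))
    (hS2 : 2 * S.ncard ≤ 2 ^ d) :
    S.ncard ≤ (edgeBoundary (cubeGraph d) S).ncard := by
  obtain ⟨A, rfl⟩ : ∃ A : Finset (Fin d → Bool), ↑A = S :=
    ⟨S.toFinite.toFinset, S.toFinite.coe_toFinset⟩
  rw [Set.ncard_coe_finset] at hS2 ⊢
  rw [SimpleGraph.ncard_edgeBoundary_coe]
  have := min_card_le_card_boundaryPairs_cubeGraph A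
  omega

/-- The hypercube graph `Q_d` has edge expansion at least 1: every nonempty vertex set
`S` with `|S| ≤ 2^{d-1}` (i.e. `2|S| ≤ 2^d`) has at least `|S|` boundary edges. -/
theorem cubeGraph_edge_expansion
    (d : ℕ) (S : Set (Fin d → Bool)) (hS : S.Nonempty)
    (hS2 : 2 * S.ncard ≤ 2 ^ d) :
    S.ncard ≤ (edgeBoundary (cubeGraph d) S).ncard :=
  cubeGraph_edge_expansion_general d S hS2
end

section
/- Let G = (V, E) be a finite graph, let s and t be stable sets of G, and let A be the union of the vertex sets of some of the connected components of the induced subgraph G[s △ t] (where △ denotes symmetric difference). Then s △ A is again a stable set of G. -/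
/-- A stable (independent) set of a graph: a set of vertices no two of which are
adjacent. -/
def IsStableSet {V : Type*} (G : SimpleGraph V) (s : Set V) : Prop :=
  ∀ v ∈ s, ∀ w ∈ s, ¬ G.Adj v w

/-- If `s` and `t` are stable sets of a finite graph `G` and `A` is the union of the
vertex sets of some of the connected components of the induced subgraph `G[s △ t]`,
then `s △ A` is again a stable set of `G`. -/
theorem symmDiff_component_union_isStableSet
    {V : Type*} [Fintype V] (G : SimpleGraph V) (s t : Set V)
    (hs : IsStableSet G s) (ht : IsStableSet G t) (A : Set V)
    (hA : ∃ S : Set ((G.induce (symmDiff s t)).ConnectedComponent),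
      A = Subtype.val '' (⋃ C ∈ S, C.supp)) :
    IsStableSet G (symmDiff s A) := by
  obtain ⟨S, rfl⟩ := hA
  have memA : ∀ x : V, x ∈ (Subtype.val '' (⋃ C ∈ S, C.supp)) ↔
      ∃ h : x ∈ symmDiff s t, (G.induce (symmDiff s t)).connectedComponentMk ⟨x, h⟩ ∈ S := by
    intro x
    constructor
    · rintro ⟨⟨y, hy⟩, hmem, rfl⟩
      simp only [Set.mem_iUnion] at hmem
      obtain ⟨C, hC, hyC⟩ := hmem
      rw [SimpleGraph.ConnectedComponent.mem_supp_iff] at hyC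
      exact ⟨hy, hyC ▸ hC⟩
    · rintro ⟨h, hS⟩
      refine ⟨⟨x, h⟩, ?_, rfl⟩
      simp only [Set.mem_iUnion]
      exact ⟨_, hS, rfl⟩
  have hAU : (Subtype.val '' (⋃ C ∈ S, C.supp)) ⊆ symmDiff s t := by
    intro x hx
    obtain ⟨h, -⟩ := (memA x).1 hx
    exact h
  have hclos : ∀ x y : V, x ∈ (Subtype.val '' (⋃ C ∈ S, C.supp)) → y ∈ symmDiff s t →
      G.Adj x y → y ∈ (Subtype.val '' (⋃ C ∈ S, C.supp)) := by
    intro x y hx hy hxy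
    obtain ⟨hxU, hS⟩ := (memA x).1 hx
    refine (memA y).2 ⟨hy, ?_⟩
    have hadj : (G.induce (symmDiff s t)).Adj ⟨x, hxU⟩ ⟨y, hy⟩ := by
      simp [SimpleGraph.comap_adj, hxy]
    have := SimpleGraph.ConnectedComponent.sound hadj.symm.reachable
    rwa [this]
  intro v hv w hw hvw
  rw [Set.mem_symmDiff] at hv hw
  have tmem : ∀ x : V, x ∈ (Subtype.val '' (⋃ C ∈ S, C.supp)) → x ∉ s → x ∈ t := by
    intro x hx hxs
    rcases Set.mem_symmDiff.1 (hAU hx) with ⟨hxs', -⟩ | ⟨hxt, -⟩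
    · exact absurd hxs' hxs
    · exact hxt
  have mixed : ∀ x y : V, x ∈ s → x ∉ (Subtype.val '' (⋃ C ∈ S, C.supp)) →
      y ∈ (Subtype.val '' (⋃ C ∈ S, C.supp)) → y ∉ s → ¬ G.Adj x y := by
    intro x y hxs hxA hyA hys hxy
    by_cases hxt : x ∈ t
    · exact ht x hxt y (tmem y hyA hys) hxy
    · have hxU : x ∈ symmDiff s t := Set.mem_symmDiff.2 (Or.inl ⟨hxs, hxt⟩)
      exact hxA (hclos y x hyA hxU hxy.symm)
  rcases hv with ⟨hvs, hvA⟩ | ⟨hvA, hvs⟩ <;> rcases hw with ⟨hws, hwA⟩ | ⟨hwA, hws⟩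
  · exact hs v hvs w hws hvw
  · exact mixed v w hvs hvA hwA hws hvw
  · exact mixed w v hws hwA hvA hvs hvw.symm
  · exact ht v (tmem v hvA hvs) w (tmem w hwA hws) hvw
end

section
/- Let G = (V, E) be a finite graph, let s, t be stable sets of G, and let A_1, …, A_k (k ≥ 1, all nonempty) be the vertex sets of the connected components of the induced subgraph G[s △ t]. For J ⊆ {1, …, k} set v_J = s △ (⋃_{j ∈ J} A_j). Then the map J ↦ v_J is injective, each v_J is a stable set of G, and for distinct J, J' ⊆ {1, …, k} the induced subgraph G[v_J △ v_{J'}] is connected if and only if |J △ J'| = 1. In particular, under Chvátal's adjacency criterion (two stable sets are adjacent iff the induced subgraph on their symmetric difference is connected), the 2^k stable sets v_J with the adjacency 'differ in exactly one component' form the graph of a k-dimensional cube. -/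
/-- `A` is the vertex set of a connected component of the induced subgraph `G[W]`. -/
def IsCompSet {V : Type*} (G : SimpleGraph V) (W A : Set V) : Prop :=
  ∃ C : (G.induce W).ConnectedComponent, A = Subtype.val '' C.supp

/-- Let `s, t` be stable sets of a finite graph `G` and let `A 1, …, A k` (`k ≥ 1`) be
the vertex sets of the connected components of `G[s △ t]`.  For `J ⊆ {1, …, k}` set
`v J = s △ (⋃_{j ∈ J} A j)`.  Then `J ↦ v J` is injective, each `v J` is a stable set,
and for distinct `J, J'` the induced subgraph `G[v J △ v J']` is connected if and only
if `|J △ J'| = 1`.  (By Chvátal's adjacency criterion, these `2^k` stable sets thus form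
the graph of a `k`-dimensional cube.) -/
theorem cube_spanned_by_stable_sets
    {V : Type*} [Fintype V] (G : SimpleGraph V) (s t : Set V)
    (hs : IsStableSet G s) (ht : IsStableSet G t) (k : ℕ) (hk : 1 ≤ k)
    (A : Fin k → Set V)
    (hcomp : ∀ j, IsCompSet G (symmDiff s t) (A j))
    (hinj : Function.Injective A)
    (hall : ∀ B, IsCompSet G (symmDiff s t) B → ∃ j, B = A j) :
    Function.Injective (fun J : Finset (Fin k) => symmDiff s (⋃ j ∈ J, A j)) ∧
    (∀ J : Finset (Fin k), IsStableSet G (symmDiff s (⋃ j ∈ J, A j))) ∧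
    (∀ J J' : Finset (Fin k), J ≠ J' →
      ((G.induce (symmDiff (symmDiff s (⋃ j ∈ J, A j))
          (symmDiff s (⋃ j ∈ J', A j)))).Connected ↔ (symmDiff J J').card = 1)) := by
  classical
  set W := symmDiff s t with hWdef
  -- basic facts about the A j
  have hAW : ∀ j, A j ⊆ W := by
    intro j x hx
    obtain ⟨C, hC⟩ := hcomp j
    rw [hC] at hx
    obtain ⟨y, _, rfl⟩ := hx
    exact y.2
  have hAne : ∀ j, (A j).Nonempty := by
    intro j
    obtain ⟨C, hC⟩ := hcomp j
    obtain ⟨v, hv⟩ := C.exists_rep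
    exact ⟨v, by
      rw [hC]
      exact ⟨v, by rw [SimpleGraph.ConnectedComponent.mem_supp_iff]; exact hv, rfl⟩⟩
  have hdisj : ∀ i j, i ≠ j → Disjoint (A i) (A j) := by
    intro i j hij
    obtain ⟨Ci, hCi⟩ := hcomp i
    obtain ⟨Cj, hCj⟩ := hcomp j
    rw [Set.disjoint_left]
    intro x hxi hxj
    rw [hCi] at hxi
    rw [hCj] at hxj
    obtain ⟨y, hy, rfl⟩ := hxi
    obtain ⟨z, hz, hzy⟩ := hxj
    have hzey : z = y := Subtype.ext hzy
    subst hzey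
    rw [SimpleGraph.ConnectedComponent.mem_supp_iff] at hy hz
    exact hij (hinj (by rw [hCi, hCj, ← hy, ← hz]))
  have huniq : ∀ i j x, x ∈ A i → x ∈ A j → i = j := by
    intro i j x hi hj
    by_contra h
    exact Set.disjoint_left.1 (hdisj i j h) hi hj
  -- an edge from A j to a vertex of W stays in A j
  have adj_comp : ∀ j u w, u ∈ A j → w ∈ W → G.Adj u w → w ∈ A j := by
    intro j u w hu hw hadj
    obtain ⟨C, hC⟩ := hcomp j
    rw [hC] at hu ⊢
    obtain ⟨u', hu', rfl⟩ := hu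
    refine ⟨⟨w, hw⟩, ?_, rfl⟩
    rw [SimpleGraph.ConnectedComponent.mem_supp_iff] at hu' ⊢
    rw [← hu']
    refine SimpleGraph.ConnectedComponent.sound ?_
    have : (G.induce W).Adj u' ⟨w, hw⟩ := hadj
    exact this.symm.reachable
  -- a walk in an induced subgraph of W starting in A j stays in A j
  have walk_lemma : ∀ (T : Set V), T ⊆ W → ∀ j (x y : T), (G.induce T).Walk x y →
      (x : V) ∈ A j → (y : V) ∈ A j := by
    intro T hT j x y p
    induction p with
    | nil => exact id
    | @cons a b c h p ih =>
      intro hx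
      have hab : G.Adj (a : V) (b : V) := h
      exact ih (adj_comp j _ _ hx (hT b.2) hab)
  -- each A j induces a connected subgraph
  have lift_walk : ∀ (x y : W), (G.induce W).Walk x y → ∀ j (hx : (x : V) ∈ A j)
      (hy : (y : V) ∈ A j), (G.induce (A j)).Reachable ⟨(x : V), hx⟩ ⟨(y : V), hy⟩ := by
    intro x y p
    induction p with
    | nil => intro j hx hy; exact SimpleGraph.Reachable.refl _
    | @cons a b c h p ih =>
      intro j hx hy
      have hab : G.Adj (a : V) (b : V) := h
      have hb : (b : V) ∈ A j := adj_comp j _ _ hx b.2 hab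
      have step : (G.induce (A j)).Adj ⟨(a : V), hx⟩ ⟨(b : V), hb⟩ := hab
      exact step.reachable.trans (ih j hb hy)
  have conn : ∀ j, (G.induce (A j)).Connected := by
    intro j
    rw [SimpleGraph.connected_iff]
    constructor
    · rintro ⟨x, hx⟩ ⟨y, hy⟩
      obtain ⟨C, hC⟩ := hcomp j
      have hx' := hx
      have hy' := hy
      rw [hC] at hx' hy'
      obtain ⟨x', hx'C, hxe⟩ := hx'
      obtain ⟨y', hy'C, hye⟩ := hy'
      rw [SimpleGraph.ConnectedComponent.mem_supp_iff] at hx'C hy'C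
      have hreach : (G.induce W).Reachable x' y' :=
        SimpleGraph.ConnectedComponent.exact (hx'C.trans hy'C.symm)
      obtain ⟨p⟩ := hreach
      have hx2 : (x' : V) ∈ A j := by rw [hxe]; exact hx
      have hy2 : (y' : V) ∈ A j := by rw [hye]; exact hy
      have := lift_walk x' y' p j hx2 hy2
      convert this using 2 <;> simp [hxe, hye]
    · obtain ⟨x, hx⟩ := hAne j
      exact ⟨⟨x, hx⟩⟩
  -- symmDiff of the unions
  have hUU : ∀ J J' : Finset (Fin k),
      symmDiff (⋃ j ∈ J, A j) (⋃ j ∈ J', A j) = ⋃ j ∈ symmDiff J J', A j := by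
    intro J J'
    ext x
    simp only [Set.mem_symmDiff, Set.mem_iUnion, exists_prop, Finset.mem_symmDiff]
    constructor
    · rintro (⟨⟨j, hjJ, hxj⟩, hnot⟩ | ⟨⟨j, hjJ', hxj⟩, hnot⟩)
      · exact ⟨j, Or.inl ⟨hjJ, fun h => hnot ⟨j, h, hxj⟩⟩, hxj⟩
      · exact ⟨j, Or.inr ⟨hjJ', fun h => hnot ⟨j, h, hxj⟩⟩, hxj⟩
    · rintro ⟨j, (⟨hjJ, hjJ'⟩ | ⟨hjJ', hjJ⟩), hxj⟩
      · refine Or.inl ⟨⟨j, hjJ, hxj⟩, ?_⟩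
        rintro ⟨i, hiJ', hxi⟩
        exact hjJ' ((huniq j i x hxj hxi) ▸ hiJ')
      · refine Or.inr ⟨⟨j, hjJ', hxj⟩, ?_⟩
        rintro ⟨i, hiJ, hxi⟩
        exact hjJ ((huniq j i x hxj hxi) ▸ hiJ)
  have key : ∀ J J' : Finset (Fin k),
      symmDiff (symmDiff s (⋃ j ∈ J, A j)) (symmDiff s (⋃ j ∈ J', A j))
        = ⋃ j ∈ symmDiff J J', A j := by
    intro J J'
    rw [symmDiff_symmDiff_symmDiff_comm, symmDiff_self, bot_symmDiff, hUU]
  refine ⟨?_, ?_, ?_⟩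
  · -- injectivity
    intro J J' h
    have hU : (⋃ j ∈ J, A j) = ⋃ j ∈ J', A j := symmDiff_right_injective s h
    ext j
    constructor
    · intro hj
      obtain ⟨x, hx⟩ := hAne j
      have hxU : x ∈ ⋃ i ∈ J', A i := hU ▸ Set.mem_biUnion hj hx
      simp only [Set.mem_iUnion, exists_prop] at hxU
      obtain ⟨i, hi, hxi⟩ := hxU
      exact (huniq j i x hx hxi) ▸ hi
    · intro hj
      obtain ⟨x, hx⟩ := hAne j
      have hxU : x ∈ ⋃ i ∈ J, A i := hU ▸ Set.mem_biUnion hj hx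
      simp only [Set.mem_iUnion, exists_prop] at hxU
      obtain ⟨i, hi, hxi⟩ := hxU
      exact (huniq j i x hx hxi) ▸ hi
  · -- stability
    intro J u hu w hw hadj
    have hUW : (⋃ j ∈ J, A j) ⊆ W := Set.iUnion₂_subset fun j _ => hAW j
    have htsub : ∀ x, x ∈ (⋃ j ∈ J, A j) → x ∉ s → x ∈ t := by
      intro x hx hxs
      have := hUW hx
      rw [hWdef, Set.mem_symmDiff] at this
      rcases this with ⟨h1, _⟩ | ⟨h1, _⟩
      · exact absurd h1 hxs
      · exact h1
    have case3 : ∀ u w, u ∈ s → u ∉ (⋃ j ∈ J, A j) → w ∈ (⋃ j ∈ J, A j) → w ∉ s →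
        G.Adj u w → False := by
      intro u w hus huU hwU hws hadj
      by_cases hut : u ∈ t
      · exact ht u hut w (htsub w hwU hws) hadj
      · have huW : u ∈ W := by
          rw [hWdef, Set.mem_symmDiff]; exact Or.inl ⟨hus, hut⟩
        simp only [Set.mem_iUnion, exists_prop] at hwU
        obtain ⟨j, hjJ, hwj⟩ := hwU
        have : u ∈ A j := adj_comp j w u hwj huW hadj.symm
        exact huU (Set.mem_biUnion hjJ this)
    rw [Set.mem_symmDiff] at hu hw
    rcases hu with ⟨hus, huU⟩ | ⟨huU, hus⟩ <;> rcases hw with ⟨hws, hwU⟩ | ⟨hwU, hws⟩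
    · exact hs u hus w hws hadj
    · exact case3 u w hus huU hwU hws hadj
    · exact case3 w u hws hwU huU hus hadj.symm
    · exact ht u (htsub u huU hus) w (htsub w hwU hws) hadj
  · -- connectivity criterion
    intro J J' hne
    rw [key J J']
    have hS : (symmDiff J J').Nonempty := by
      rw [Finset.nonempty_iff_ne_empty]
      intro h
      exact hne (symmDiff_eq_bot.1 (by rw [h]; rfl))
    constructor
    · intro hconn
      by_contra hcard
      have h2 : 1 < (symmDiff J J').card :=
        lt_of_le_of_ne (Finset.one_le_card.2 hS) (Ne.symm hcard)
      obtain ⟨i, hi, j, hj, hij⟩ := Finset.one_lt_card.1 h2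
      obtain ⟨u, hu⟩ := hAne i
      obtain ⟨w, hw⟩ := hAne j
      have huT : u ∈ ⋃ l ∈ symmDiff J J', A l := Set.mem_biUnion hi hu
      have hwT : w ∈ ⋃ l ∈ symmDiff J J', A l := Set.mem_biUnion hj hw
      obtain ⟨p⟩ := hconn.preconnected ⟨u, huT⟩ ⟨w, hwT⟩
      have hTW : (⋃ l ∈ symmDiff J J', A l) ⊆ W := Set.iUnion₂_subset fun l _ => hAW l
      have : w ∈ A i := walk_lemma _ hTW i ⟨u, huT⟩ ⟨w, hwT⟩ p hu
      exact hij (huniq i j w this hw)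
    · intro hcard
      obtain ⟨j₀, hj₀⟩ := Finset.card_eq_one.1 hcard
      have hT : (⋃ l ∈ symmDiff J J', A l) = A j₀ := by
        rw [hj₀]; simp
      rw [hT]
      exact conn j₀
end

section
/- Let G = (V, E) be a finite graph. For stable sets s, t of G, let A_1, …, A_k be the vertex sets of the connected components of G[s △ t] and define the cube c_{st} = { s △ (⋃_{j ∈ J} A_j) : J ⊆ {1, …, k} }, a set of stable sets of G. Then the collection 𝒞 = { c_{st} : s, t stable sets of G } is closed under pairwise intersection up to the following precise form: for any stable sets s, t, s̃, t̃ of G, either c_{st} ∩ c_{s̃ t̃} = ∅, or there exist stable sets u, w of G with c_{st} ∩ c_{s̃ t̃} = c_{uw}. More precisely, if v ∈ c_{st} ∩ c_{s̃ t̃} and A_1, …, A_l are exactly those components of G[s △ t] which also occur as components of G[s̃ △ t̃], then c_{st} ∩ c_{s̃ t̃} = { v △ (⋃_{i ∈ I} A_i) : I ⊆ {1, …, l} }. -/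
/-- The cube `c_{st}` spanned by two stable sets `s, t`: the stable sets of the form
`s △ (⋃_{j ∈ J} A j)` where the `A j` range over unions of connected components of
`G[s △ t]`. -/
def stabCube {V : Type*} (G : SimpleGraph V) (s t : Set V) : Set (Set V) :=
  {u | ∃ S : Set ((G.induce (symmDiff s t)).ConnectedComponent),
    u = symmDiff s (Subtype.val '' (⋃ C ∈ S, C.supp))}

section Aux

open SimpleGraph

/-- `U` is closed under reachability within `G[W]` (i.e. a union of components). -/
def CC {V : Type*} (G : SimpleGraph V) (W U : Set V) : Prop :=
  U ⊆ W ∧ ∀ x y : W, (G.induce W).Reachable x y → ((x : V) ∈ U ↔ (y : V) ∈ U)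

variable {V : Type*} {G : SimpleGraph V} {W W' U M : Set V}

lemma cc_symmDiff {U' : Set V} (h : CC G W U) (h' : CC G W U') :
    CC G W (symmDiff U U') := by
  refine ⟨fun x hx => ?_, fun x y hr => ?_⟩
  · rcases Set.mem_symmDiff.mp hx with ⟨hx1, _⟩ | ⟨hx1, _⟩
    exacts [h.1 hx1, h'.1 hx1]
  · rw [Set.mem_symmDiff, Set.mem_symmDiff, h.2 x y hr, h'.2 x y hr]

lemma cc_iUnion {ι : Sort*} {A : ι → Set V} (h : ∀ i, CC G W (A i)) :
    CC G W (⋃ i, A i) := by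
  refine ⟨Set.iUnion_subset fun i => (h i).1, fun x y hr => ?_⟩
  simp only [Set.mem_iUnion]
  constructor
  · rintro ⟨i, hx⟩; exact ⟨i, ((h i).2 x y hr).mp hx⟩
  · rintro ⟨i, hy⟩; exact ⟨i, ((h i).2 x y hr).mpr hy⟩

lemma cc_sUnion {𝒜 : Set (Set V)} (h : ∀ A ∈ 𝒜, CC G W A) : CC G W (⋃₀ 𝒜) := by
  rw [Set.sUnion_eq_iUnion]
  exact cc_iUnion fun A => h A A.2

lemma isCompSet_cc {A : Set V} (h : IsCompSet G W A) : CC G W A := by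
  obtain ⟨C, rfl⟩ := h
  refine ⟨?_, fun x y hr => ?_⟩
  · rintro _ ⟨z, _, rfl⟩; exact z.2
  · rw [Subtype.val_injective.mem_set_image, Subtype.val_injective.mem_set_image,
      ConnectedComponent.mem_supp_iff, ConnectedComponent.mem_supp_iff,
      ConnectedComponent.sound hr]

lemma reach_le (hUW : U ⊆ W) {x y : ↥U} (h : (G.induce U).Reachable x y) :
    (G.induce W).Reachable ⟨x, hUW x.2⟩ ⟨y, hUW y.2⟩ :=
  h.map (G.induceHomOfLE hUW).toHom

lemma walk_reach_down (hcc : CC G W U) {a b : ↥W}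
    (p : (G.induce W).Walk a b) (ha : (a : V) ∈ U) :
    ∃ hb : (b : V) ∈ U, (G.induce U).Reachable ⟨a, ha⟩ ⟨b, hb⟩ := by
  induction p with
  | nil => exact ⟨ha, Reachable.refl _⟩
  | @cons a c b h p ih =>
    have hac : G.Adj a c := h
    have hc : (c : V) ∈ U := (hcc.2 a c h.reachable).mp ha
    obtain ⟨hb, hr⟩ := ih hc
    have step : (G.induce U).Adj ⟨a, ha⟩ ⟨c, hc⟩ := hac
    exact ⟨hb, step.reachable.trans hr⟩

lemma reach_iff (hcc : CC G W U) {x y : V} (hx : x ∈ U) (hy : y ∈ U) :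
    (G.induce U).Reachable ⟨x, hx⟩ ⟨y, hy⟩ ↔
      (G.induce W).Reachable ⟨x, hcc.1 hx⟩ ⟨y, hcc.1 hy⟩ := by
  constructor
  · exact fun h => reach_le hcc.1 h
  · rintro ⟨p⟩
    obtain ⟨hb, hr⟩ := walk_reach_down hcc p hx
    exact hr

lemma comp_up {B : Set V} (hcc : CC G W U) (hB : IsCompSet G U B) :
    IsCompSet G W B := by
  obtain ⟨C, rfl⟩ := hB
  obtain ⟨x, hx⟩ := C.exists_rep
  refine ⟨(G.induce W).connectedComponentMk ⟨x, hcc.1 x.2⟩, ?_⟩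
  ext v
  simp only [Set.mem_image, ConnectedComponent.mem_supp_iff]
  constructor
  · rintro ⟨y, hy, rfl⟩
    refine ⟨⟨y, hcc.1 y.2⟩, ?_, rfl⟩
    exact ConnectedComponent.sound
      ((reach_iff hcc y.2 x.2).mp (ConnectedComponent.exact (hy.trans hx.symm)))
  · rintro ⟨z, hz, rfl⟩
    have hr := ConnectedComponent.exact hz
    have hzU : (z : V) ∈ U := (hcc.2 _ _ hr).mpr x.2
    refine ⟨⟨z, hzU⟩, ?_, rfl⟩
    rw [← hx]
    exact ConnectedComponent.sound ((reach_iff hcc hzU x.2).mpr hr)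

lemma comp_down {B : Set V} (hcc : CC G W U) (hB : IsCompSet G W B) (hBU : B ⊆ U) :
    IsCompSet G U B := by
  obtain ⟨C, rfl⟩ := hB
  obtain ⟨x, hx⟩ := C.exists_rep
  have hxU : (x : V) ∈ U :=
    hBU ⟨x, (ConnectedComponent.mem_supp_iff _ _).mpr hx, rfl⟩
  refine ⟨(G.induce U).connectedComponentMk ⟨x, hxU⟩, ?_⟩
  ext v
  simp only [Set.mem_image, ConnectedComponent.mem_supp_iff]
  constructor
  · rintro ⟨y, hy, rfl⟩
    have hyU : (y : V) ∈ U :=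
      hBU ⟨y, (ConnectedComponent.mem_supp_iff _ _).mpr hy, rfl⟩
    refine ⟨⟨y, hyU⟩, ?_, rfl⟩
    exact ConnectedComponent.sound
      ((reach_iff hcc hyU hxU).mpr (ConnectedComponent.exact (hy.trans hx.symm)))
  · rintro ⟨z, hz, rfl⟩
    have hr := ConnectedComponent.exact hz
    refine ⟨⟨z, hcc.1 z.2⟩, ?_, rfl⟩
    rw [← hx]
    exact ConnectedComponent.sound ((reach_iff hcc z.2 hxU).mp hr)

lemma eq_sUnion_comps (G : SimpleGraph V) (U : Set V) :
    U = ⋃₀ {B | IsCompSet G U B} := by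
  ext x
  constructor
  · intro hx
    exact ⟨Subtype.val '' ((G.induce U).connectedComponentMk ⟨x, hx⟩).supp,
      ⟨_, rfl⟩, ⟨⟨x, hx⟩, by simp [ConnectedComponent.mem_supp_iff], rfl⟩⟩
  · rintro ⟨B, ⟨C, rfl⟩, ⟨y, _, rfl⟩⟩
    exact y.2

lemma cc_iff : CC G W U ↔ ∃ 𝒜 ⊆ {B | IsCompSet G W B}, U = ⋃₀ 𝒜 := by
  constructor
  · intro h
    exact ⟨{B | IsCompSet G U B}, fun B hB => comp_up h hB, eq_sUnion_comps G U⟩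
  · rintro ⟨𝒜, h𝒜, rfl⟩
    exact cc_sUnion fun A hA => isCompSet_cc (h𝒜 hA)

lemma cc_trans (hM : CC G W M) (hU : CC G M U) : CC G W U := by
  refine ⟨hU.1.trans hM.1, fun x y hr => ?_⟩
  constructor
  · intro hx
    have hxM : (x : V) ∈ M := hU.1 hx
    have hyM : (y : V) ∈ M := (hM.2 x y hr).mp hxM
    have h2 : (G.induce M).Reachable ⟨x, hxM⟩ ⟨y, hyM⟩ := (reach_iff hM hxM hyM).mpr hr
    exact (hU.2 ⟨x, hxM⟩ ⟨y, hyM⟩ h2).mp hx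
  · intro hy
    have hyM : (y : V) ∈ M := hU.1 hy
    have hxM : (x : V) ∈ M := (hM.2 x y hr).mpr hyM
    have h2 : (G.induce M).Reachable ⟨x, hxM⟩ ⟨y, hyM⟩ := (reach_iff hM hxM hyM).mpr hr
    exact (hU.2 ⟨x, hxM⟩ ⟨y, hyM⟩ h2).mpr hy

lemma img_biUnion (S : Set ((G.induce W).ConnectedComponent)) :
    (Subtype.val '' (⋃ C ∈ S, C.supp) : Set V) =
      ⋃₀ ((fun C : (G.induce W).ConnectedComponent => Subtype.val '' C.supp) '' S) := by
  rw [Set.sUnion_image, Set.image_iUnion₂]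

lemma mem_stabCube_iff {s t u : Set V} :
    u ∈ stabCube G s t ↔ ∃ D, CC G (symmDiff s t) D ∧ u = symmDiff s D := by
  constructor
  · rintro ⟨S, rfl⟩
    refine ⟨_, ?_, rfl⟩
    rw [cc_iff]
    refine ⟨_, ?_, img_biUnion S⟩
    rintro B ⟨C, _, rfl⟩
    exact ⟨C, rfl⟩
  · rintro ⟨D, hD, rfl⟩
    rw [cc_iff] at hD
    obtain ⟨𝒜, h𝒜, rfl⟩ := hD
    refine ⟨{C | Subtype.val '' C.supp ∈ 𝒜}, ?_⟩
    have : 𝒜 = (fun C : (G.induce (symmDiff s t)).ConnectedComponent =>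
        Subtype.val '' C.supp) '' {C | Subtype.val '' C.supp ∈ 𝒜} := by
      ext B
      constructor
      · intro hB
        obtain ⟨C, rfl⟩ := h𝒜 hB
        exact ⟨C, hB, rfl⟩
      · rintro ⟨C, hC, rfl⟩
        exact hC
    rw [img_biUnion, ← this]

lemma stable_mem {s t u : Set V} (hs : IsStableSet G s) (ht : IsStableSet G t)
    (hu : u ∈ stabCube G s t) : IsStableSet G u := by
  classical
  obtain ⟨D, hD, rfl⟩ := mem_stabCube_iff.mp hu
  intro a ha b hb hab
  have mem_t : ∀ c, c ∈ D → c ∉ s → c ∈ t := by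
    intro c hc hcs
    rcases Set.mem_symmDiff.mp (hD.1 hc) with ⟨h1, _⟩ | ⟨h1, _⟩
    · exact absurd h1 hcs
    · exact h1
  rcases Set.mem_symmDiff.mp ha with ⟨has, haD⟩ | ⟨haD, has⟩ <;>
    rcases Set.mem_symmDiff.mp hb with ⟨hbs, hbD⟩ | ⟨hbD, hbs⟩
  · exact hs a has b hbs hab
  · -- a ∈ s \ D, b ∈ D \ s
    by_cases hat : a ∈ t
    · exact ht a hat b (mem_t b hbD hbs) hab
    · have haW : a ∈ symmDiff s t := Set.mem_symmDiff.mpr (Or.inl ⟨has, hat⟩)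
      have hbW : b ∈ symmDiff s t := hD.1 hbD
      have step : (G.induce (symmDiff s t)).Adj ⟨a, haW⟩ ⟨b, hbW⟩ := hab
      exact haD ((hD.2 _ _ step.reachable).mpr hbD)
  · by_cases hbt : b ∈ t
    · exact ht a (mem_t a haD has) b hbt hab
    · have hbW : b ∈ symmDiff s t := Set.mem_symmDiff.mpr (Or.inl ⟨hbs, hbt⟩)
      have haW : a ∈ symmDiff s t := hD.1 haD
      have step : (G.induce (symmDiff s t)).Adj ⟨a, haW⟩ ⟨b, hbW⟩ := hab
      exact hbD ((hD.2 _ _ step.reachable).mp haD)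
  · exact ht a (mem_t a haD has) b (mem_t b hbD hbs) hab

end Aux

/-- The collection of cubes `c_{st}` spanned by pairs of stable sets of a finite graph
`G` is closed under pairwise intersection in the following precise form: any two cubes
either intersect emptily or intersect in a cube `c_{uw}`; more precisely, if `v` lies in
the intersection of `c_{st}` and `c_{s̃t̃}` and `A 1, …, A l` are exactly the common
connected components of `G[s △ t]` and `G[s̃ △ t̃]`, then the intersection equals
`{ v △ (⋃_{i ∈ I} A i) : I ⊆ {1, …, l} }`. -/
theorem stabCube_inter
    {V : Type*} [Fintype V] (G : SimpleGraph V) (s t s' t' : Set V)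
    (hs : IsStableSet G s) (ht : IsStableSet G t)
    (hs' : IsStableSet G s') (ht' : IsStableSet G t') :
    (stabCube G s t ∩ stabCube G s' t' = ∅ ∨
      ∃ u w : Set V, IsStableSet G u ∧ IsStableSet G w ∧
        stabCube G s t ∩ stabCube G s' t' = stabCube G u w) ∧
    (∀ v ∈ stabCube G s t ∩ stabCube G s' t', ∀ (l : ℕ) (A : Fin l → Set V),
      (∀ i, IsCompSet G (symmDiff s t) (A i) ∧ IsCompSet G (symmDiff s' t') (A i)) →
      Function.Injective A →
      (∀ B, IsCompSet G (symmDiff s t) B → IsCompSet G (symmDiff s' t') B →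
        ∃ i, B = A i) →
      stabCube G s t ∩ stabCube G s' t' =
        {u | ∃ I : Finset (Fin l), u = symmDiff v (⋃ i ∈ I, A i)}) := by
  classical
  set W := symmDiff s t with hWdef
  set W' := symmDiff s' t' with hW'def
  -- key characterization of the intersection relative to a point v in it
  have key : ∀ v ∈ stabCube G s t ∩ stabCube G s' t', ∀ u : Set V,
      (u ∈ stabCube G s t ∩ stabCube G s' t' ↔
        ∃ U, CC G W U ∧ CC G W' U ∧ u = symmDiff v U) := by
    rintro v ⟨hv1, hv2⟩ u
    obtain ⟨D, hD, hvD⟩ := mem_stabCube_iff.mp hv1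
    obtain ⟨D', hD', hvD'⟩ := mem_stabCube_iff.mp hv2
    constructor
    · rintro ⟨hu1, hu2⟩
      obtain ⟨E, hE, rfl⟩ := mem_stabCube_iff.mp hu1
      obtain ⟨E', hE', h2⟩ := mem_stabCube_iff.mp hu2
      have e1 : symmDiff v (symmDiff D E) = symmDiff s E := by
        rw [hvD, symmDiff_assoc, symmDiff_symmDiff_cancel_left]
      have e1' : symmDiff v (symmDiff D' E') = symmDiff s' E' := by
        rw [hvD', symmDiff_assoc, symmDiff_symmDiff_cancel_left]
      have hEE : symmDiff D E = symmDiff D' E' := by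
        apply symmDiff_right_injective v
        show symmDiff v (symmDiff D E) = symmDiff v (symmDiff D' E')
        rw [e1, e1', ← h2]
      refine ⟨symmDiff D E, cc_symmDiff hD hE, ?_, e1.symm⟩
      rw [hEE]
      exact cc_symmDiff hD' hE'
    · rintro ⟨U, hU, hU', rfl⟩
      constructor
      · refine mem_stabCube_iff.mpr ⟨symmDiff D U, cc_symmDiff hD hU, ?_⟩
        rw [hvD, symmDiff_assoc]
      · refine mem_stabCube_iff.mpr ⟨symmDiff D' U, cc_symmDiff hD' hU', ?_⟩
        rw [hvD', symmDiff_assoc]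
  have part2 : ∀ v ∈ stabCube G s t ∩ stabCube G s' t', ∀ (l : ℕ) (A : Fin l → Set V),
      (∀ i, IsCompSet G W (A i) ∧ IsCompSet G W' (A i)) →
      Function.Injective A →
      (∀ B, IsCompSet G W B → IsCompSet G W' B → ∃ i, B = A i) →
      stabCube G s t ∩ stabCube G s' t' =
        {u | ∃ I : Finset (Fin l), u = symmDiff v (⋃ i ∈ I, A i)} := by
    intro v hv l A hA _ hcover
    ext u
    rw [key v hv u]
    constructor
    · rintro ⟨U, hU, hU', rfl⟩
      refine ⟨Finset.univ.filter (fun i => A i ⊆ U), ?_⟩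
      have hUeq : U = ⋃ i ∈ Finset.univ.filter (fun i => A i ⊆ U), A i := by
        ext x
        simp only [Set.mem_iUnion, Finset.mem_filter, Finset.mem_univ, true_and]
        constructor
        · intro hx
          have hxB : x ∈ Subtype.val ''
              ((G.induce U).connectedComponentMk ⟨x, hx⟩).supp :=
            ⟨⟨x, hx⟩, by simp [SimpleGraph.ConnectedComponent.mem_supp_iff], rfl⟩
          have hBU : (Subtype.val ''
              ((G.induce U).connectedComponentMk ⟨x, hx⟩).supp : Set V) ⊆ U := by
            rintro _ ⟨z, _, rfl⟩; exact z.2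
          obtain ⟨i, hi⟩ := hcover _ (comp_up hU ⟨_, rfl⟩) (comp_up hU' ⟨_, rfl⟩)
          exact ⟨i, ⟨hi ▸ hBU, hi ▸ hxB⟩⟩
        · rintro ⟨i, hiU, hxi⟩
          exact hiU hxi
      rw [← hUeq]
    · rintro ⟨I, rfl⟩
      refine ⟨⋃ i ∈ I, A i, ?_, ?_, rfl⟩
      · exact cc_iUnion fun i => cc_iUnion fun hi => isCompSet_cc (hA i).1
      · exact cc_iUnion fun i => cc_iUnion fun hi => isCompSet_cc (hA i).2
  refine ⟨?_, part2⟩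
  rcases Set.eq_empty_or_nonempty (stabCube G s t ∩ stabCube G s' t') with h | ⟨v, hv⟩
  · exact Or.inl h
  · right
    set 𝒜 := {B | IsCompSet G W B ∧ IsCompSet G W' B} with h𝒜
    set Uf := ⋃₀ 𝒜 with hUf
    have hccf : CC G W Uf := cc_sUnion fun B hB => isCompSet_cc hB.1
    have hccf' : CC G W' Uf := cc_sUnion fun B hB => isCompSet_cc hB.2
    have hw : symmDiff v Uf ∈ stabCube G s t ∩ stabCube G s' t' :=
      (key v hv _).mpr ⟨Uf, hccf, hccf', rfl⟩
    refine ⟨v, symmDiff v Uf, stable_mem hs ht hv.1, stable_mem hs ht hw.1, ?_⟩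
    ext u
    rw [key v hv u, mem_stabCube_iff]
    have hWf : symmDiff v (symmDiff v Uf) = Uf := symmDiff_symmDiff_cancel_left v Uf
    rw [hWf]
    constructor
    · rintro ⟨U, hU, hU', rfl⟩
      refine ⟨U, ?_, rfl⟩
      rw [cc_iff]
      refine ⟨{B | IsCompSet G U B}, ?_, eq_sUnion_comps G U⟩
      intro B hB
      have h1 : IsCompSet G W B := comp_up hU hB
      have h2 : IsCompSet G W' B := comp_up hU' hB
      exact comp_down hccf h1 (Set.subset_sUnion_of_mem ⟨h1, h2⟩)
    · rintro ⟨U, hU, rfl⟩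
      exact ⟨U, cc_trans hccf hU, cc_trans hccf' hU, rfl⟩
end

section
/- Let G = (V, E) be a finite graph and let V_STAB be the set of all stable sets of G. Define the graph G_STAB on V_STAB by joining two distinct stable sets s, t by an edge if and only if the induced subgraph G[s △ t] is connected (Chvátal's characterization of the graph of the stable set polytope STAB(G)). Then there exists a neighbourly abstract cubical complex K = (V_STAB, 𝒞) whose graph is G_STAB; explicitly, one may take 𝒞 = { c_{st} : s, t ∈ V_STAB }, where c_{st} = { s △ (⋃_{j ∈ J} A_j) : J ⊆ {1, …, k} } and A_1, …, A_k are the vertex sets of the connected components of G[s △ t]. -/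
/-- The graph of the stable set polytope `STAB(G)` (by Chvátal's characterization):
vertices are the stable sets of `G`, two distinct stable sets being adjacent iff the
induced subgraph on their symmetric difference is connected. -/
def stableSetGraph {V : Type*} (G : SimpleGraph V) :
    SimpleGraph {s : Set V // IsStableSet G s} where
  Adj s t := s ≠ t ∧ (G.induce (symmDiff s.1 t.1)).Connected
  symm := by
    constructor
    intro s t h
    exact ⟨h.1.symm, symmDiff_comm s.1 t.1 ▸ h.2⟩
  loopless := by
    constructor
    intro s h
    exact h.1 rfl

open SimpleGraph
open scoped symmDiff

section StableSetCubes

variable {V : Type*} {G : SimpleGraph V}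

def IsComponentUnion (G : SimpleGraph V) (D X : Set V) : Prop :=
  X ⊆ D ∧ ∀ ⦃v w⦄, v ∈ D → w ∈ D → G.Adj v w → (v ∈ X ↔ w ∈ X)

namespace IsComponentUnion

variable {D X Y : Set V}

theorem empty : IsComponentUnion G D ∅ :=
  ⟨Set.empty_subset D, fun _ _ _ _ _ => Iff.rfl⟩

theorem refl (D : Set V) : IsComponentUnion G D D :=
  ⟨subset_rfl, fun _ _ hv hw _ => iff_of_true hv hw⟩

protected theorem symmDiff (hX : IsComponentUnion G D X) (hY : IsComponentUnion G D Y) :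
    IsComponentUnion G D (X ∆ Y) := by
  refine ⟨Set.symmDiff_subset_union.trans (Set.union_subset hX.1 hY.1), fun v w hv hw hvw => ?_⟩
  have := hX.2 hv hw hvw
  have := hY.2 hv hw hvw
  simp only [Set.mem_symmDiff]
  tauto

theorem sUnion {𝒳 : Set (Set V)} (h𝒳 : ∀ X ∈ 𝒳, IsComponentUnion G D X) :
    IsComponentUnion G D (⋃₀ 𝒳) :=
  ⟨Set.sUnion_subset fun X hX => (h𝒳 X hX).1, fun _ _ hv hw hvw =>
    exists_congr fun X => and_congr_right fun hX => (h𝒳 X hX).2 hv hw hvw⟩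

theorem isComponentUnion_iff (hX : IsComponentUnion G D X) :
    IsComponentUnion G X Y ↔ Y ⊆ X ∧ IsComponentUnion G D Y := by
  refine ⟨fun hY => ⟨hY.1, hY.1.trans hX.1, fun v w hv hw hvw => ?_⟩,
    fun ⟨hYX, hY⟩ => ⟨hYX, fun v w hv hw => hY.2 (hX.1 hv) (hX.1 hw)⟩⟩
  by_cases hvX : v ∈ X
  · exact hY.2 hvX ((hX.2 hv hw hvw).1 hvX) hvw
  · have hwX : w ∉ X := fun hwX => hvX ((hX.2 hv hw hvw).2 hwX)
    exact iff_of_false (fun h => hvX (hY.1 h)) (fun h => hwX (hY.1 h))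

theorem isStableSet_symmDiff {s t : Set V} (hs : IsStableSet G s) (ht : IsStableSet G t)
    (hX : IsComponentUnion G (s ∆ t) X) : IsStableSet G (s ∆ X) := by
  -- an edge inside `s △ X` would lie in `s`, in `t`, or join `X` to `(s △ t) \ X`
  intro v hv w hw hvw
  have hs' := fun hvs hws => hs v hvs w hws hvw
  have ht' := fun hvt hwt => ht v hvt w hwt hvw
  have hvD := @hX.1 v
  have hwD := @hX.1 w
  have hvwX := @hX.2 v w
  simp only [Set.mem_symmDiff] at *
  tauto

theorem mem_iff_of_reachable (hX : IsComponentUnion G D X) {x y : D}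
    (h : (G.induce D).Reachable x y) : x.1 ∈ X ↔ y.1 ∈ X := by
  obtain ⟨p⟩ := h
  induction p with
  | nil => rfl
  | @cons u v _ hadj _ ih => exact (hX.2 u.2 v.2 hadj).trans ih

end IsComponentUnion

section ComponentUnion

variable (G) in
def componentUnion (D : Set V) (S : Set (G.induce D).ConnectedComponent) : Set V :=
  Subtype.val '' ⋃ C ∈ S, C.supp

variable {D : Set V} {S T : Set (G.induce D).ConnectedComponent}

theorem mem_componentUnion {v : V} :
    v ∈ componentUnion G D S ↔ ∃ hv : v ∈ D, (G.induce D).connectedComponentMk ⟨v, hv⟩ ∈ S := by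
  simp [componentUnion, ConnectedComponent.mem_supp_iff]

theorem componentUnion_symmDiff :
    componentUnion G D (S ∆ T) = componentUnion G D S ∆ componentUnion G D T := by
  ext v
  by_cases hv : v ∈ D <;> simp [mem_componentUnion, Set.mem_symmDiff, hv]

theorem componentUnion_subset_componentUnion :
    componentUnion G D S ⊆ componentUnion G D T ↔ S ⊆ T := by
  refine ⟨fun h C hC => ?_, fun h v hv => ?_⟩
  · obtain ⟨x, rfl⟩ := C.exists_rep
    obtain ⟨_, hx⟩ := mem_componentUnion.1 (h (mem_componentUnion.2 ⟨x.2, hC⟩))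
    exact hx
  · obtain ⟨hvD, hvS⟩ := mem_componentUnion.1 hv
    exact mem_componentUnion.2 ⟨hvD, h hvS⟩

theorem isComponentUnion_componentUnion (S : Set (G.induce D).ConnectedComponent) :
    IsComponentUnion G D (componentUnion G D S) := by
  refine ⟨fun v hv => (mem_componentUnion.1 hv).1, fun v w hv hw hvw => ?_⟩
  have : (G.induce D).connectedComponentMk ⟨v, hv⟩ = (G.induce D).connectedComponentMk ⟨w, hw⟩ :=
    ConnectedComponent.eq.2 (Adj.reachable (G := G.induce D) hvw)
  simp only [mem_componentUnion, exists_prop_of_true hv, exists_prop_of_true hw, this]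

theorem isComponentUnion_iff_exists_eq_componentUnion {X : Set V} :
    IsComponentUnion G D X ↔ ∃ S, X = componentUnion G D S := by
  refine ⟨fun hX => ⟨(G.induce D).connectedComponentMk '' (Subtype.val ⁻¹' X), ?_⟩, ?_⟩
  · ext v
    simp only [mem_componentUnion, Set.mem_image, Set.mem_preimage, ConnectedComponent.eq]
    exact ⟨fun hv => ⟨hX.1 hv, _, hv, .rfl⟩,
      fun ⟨_, _, hx, hxv⟩ => (hX.mem_iff_of_reachable hxv).1 hx⟩
  · rintro ⟨S, rfl⟩
    exact isComponentUnion_componentUnion S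

theorem induce_connected_iff_isComponentUnion :
    (G.induce D).Connected ↔ D.Nonempty ∧ ∀ X, IsComponentUnion G D X → X = ∅ ∨ X = D := by
  refine ⟨fun hc => ⟨Set.nonempty_coe_sort.1 hc.nonempty, fun X hX => ?_⟩, ?_⟩
  · refine X.eq_empty_or_nonempty.imp_right fun ⟨x, hx⟩ => hX.1.antisymm fun w hw => ?_
    exact (hX.mem_iff_of_reachable (hc.preconnected ⟨x, hX.1 hx⟩ ⟨w, hw⟩)).1 hx
  · rintro ⟨⟨d, hd⟩, h⟩
    let X := componentUnion G D {(G.induce D).connectedComponentMk ⟨d, hd⟩}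
    have hdX : d ∈ X := mem_componentUnion.2 ⟨hd, rfl⟩
    have hXD : X = D := (h X (isComponentUnion_componentUnion _)).resolve_left
      (Set.nonempty_iff_ne_empty.1 ⟨d, hdX⟩)
    refine (connected_iff_exists_forall_reachable _).2 ⟨⟨d, hd⟩, fun w => ?_⟩
    obtain ⟨_, hw⟩ := mem_componentUnion.1 (hXD.symm.subset w.2)
    exact (ConnectedComponent.eq.1 hw).symm

end ComponentUnion

section StabCube

variable {s t u v w : Set V}

theorem mem_stabCube : u ∈ stabCube G s t ↔ IsComponentUnion G (s ∆ t) (s ∆ u) := by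
  change (∃ S, u = s ∆ componentUnion G (s ∆ t) S) ↔ _
  rw [isComponentUnion_iff_exists_eq_componentUnion]
  exact exists_congr fun S => ⟨fun h => by rw [h, symmDiff_symmDiff_cancel_left],
    fun h => by rw [← h, symmDiff_symmDiff_cancel_left]⟩

theorem left_mem_stabCube : s ∈ stabCube G s t :=
  mem_stabCube.2 (by rw [symmDiff_self, Set.bot_eq_empty]; exact .empty)

theorem right_mem_stabCube : t ∈ stabCube G s t :=
  mem_stabCube.2 (.refl _)

theorem mem_stabCube_iff_of_mem (hu : u ∈ stabCube G s t) :
    w ∈ stabCube G s t ↔ IsComponentUnion G (s ∆ t) (u ∆ w) := by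
  have hsu := mem_stabCube.1 hu
  rw [mem_stabCube]
  constructor <;> intro hw <;> simpa [← symmDiff_assoc] using hsu.symmDiff hw

theorem isStableSet_of_mem_stabCube (hs : IsStableSet G s) (ht : IsStableSet G t)
    (hu : u ∈ stabCube G s t) : IsStableSet G u := by
  simpa using (mem_stabCube.1 hu).isStableSet_symmDiff hs ht

theorem stabCube_subset_stabCube (hv : v ∈ stabCube G s t) (hw : w ∈ stabCube G s t) :
    stabCube G v w ⊆ stabCube G s t := fun _ hu =>
  (mem_stabCube_iff_of_mem hv).2
    (((mem_stabCube_iff_of_mem hv).1 hw).isComponentUnion_iff.1 (mem_stabCube.1 hu)).2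

theorem exists_stabCube_inter_eq {s₁ t₁ s₂ t₂ : Set V} (hu₁ : u ∈ stabCube G s₁ t₁)
    (hu₂ : u ∈ stabCube G s₂ t₂) :
    ∃ w ∈ stabCube G s₁ t₁, stabCube G s₁ t₁ ∩ stabCube G s₂ t₂ = stabCube G u w := by
  let W := ⋃₀ {X | IsComponentUnion G (s₁ ∆ t₁) X ∧ IsComponentUnion G (s₂ ∆ t₂) X}
  have hW₁ : IsComponentUnion G (s₁ ∆ t₁) W := .sUnion fun X hX => hX.1
  have hW₂ : IsComponentUnion G (s₂ ∆ t₂) W := .sUnion fun X hX => hX.2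
  refine ⟨u ∆ W, (mem_stabCube_iff_of_mem hu₁).2 (by rwa [symmDiff_symmDiff_cancel_left]), ?_⟩
  ext x
  rw [Set.mem_inter_iff, mem_stabCube_iff_of_mem hu₁, mem_stabCube_iff_of_mem hu₂, mem_stabCube,
    symmDiff_symmDiff_cancel_left, hW₁.isComponentUnion_iff]
  exact ⟨fun h => ⟨Set.subset_sUnion_of_mem h, h.1⟩,
    fun h => ⟨h.2, (hW₂.isComponentUnion_iff.1 (hW₁.isComponentUnion_iff.2 h)).2⟩⟩

theorem stabCube_eq_pair_iff (hvw : v ≠ w) :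
    stabCube G v w = {v, w} ↔ (G.induce (v ∆ w)).Connected := by
  rw [induce_connected_iff_isComponentUnion, and_iff_right (Set.symmDiff_nonempty.2 hvw)]
  refine ⟨fun h X hX => ?_, fun h => ?_⟩
  · have hvX : v ∆ X ∈ stabCube G v w := mem_stabCube.2 (by rwa [symmDiff_symmDiff_cancel_left])
    rw [h] at hvX
    rcases hvX with hvX | hvX
    · exact .inl (symmDiff_eq_left.1 hvX)
    · exact .inr (by rw [← hvX, symmDiff_symmDiff_cancel_left])
  · refine (Set.insert_subset left_mem_stabCube
      (Set.singleton_subset_iff.2 right_mem_stabCube)).antisymm' fun u hu => ?_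
    rcases h _ (mem_stabCube.1 hu) with h' | h'
    · exact .inl (symmDiff_eq_bot.1 h').symm
    · exact .inr (symmDiff_right_inj.1 h')

end StabCube

theorem Bool.symmDiff_le_symmDiff_iff (p q r : Bool) : p ∆ q ≤ q ∆ r ↔ (q = r → p = q) := by
  decide +revert

theorem isCubeFace_iff {d : ℕ} {F : Set (Fin d → Bool)} :
    IsCubeFace F ↔ ∃ f₁ f₂ : Fin d → Bool, F = {x | x ∆ f₁ ≤ f₁ ∆ f₂} := by
  classical
  simp only [Pi.le_def, Pi.symmDiff_apply, Bool.symmDiff_le_symmDiff_iff]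
  refine ⟨fun ⟨S, a, hF⟩ => ⟨a, a ∆ fun j => decide (j ∉ S), ?_⟩,
    fun ⟨f₁, f₂, hF⟩ => ⟨{j | f₁ j = f₂ j}, f₁, ?_⟩⟩
  · ext x
    simp only [hF, Set.mem_ofPred_eq, Pi.symmDiff_apply]
    exact forall_congr' fun j => by by_cases hj : j ∈ S <;> simp [hj]
  · simp [hF]

section Coordinates

variable {α : Type*} {D : Set V} (e : α ≃ (G.induce D).ConnectedComponent)

def coordUnion (f : α → Bool) : Set V :=
  componentUnion G D (e '' {a | f a = true})

theorem isComponentUnion_coordUnion (f : α → Bool) : IsComponentUnion G D (coordUnion e f) :=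
  isComponentUnion_componentUnion _

theorem coordUnion_symmDiff (f g : α → Bool) :
    coordUnion e (f ∆ g) = coordUnion e f ∆ coordUnion e g := by
  have : {a | (f ∆ g) a = true} = {a | f a = true} ∆ {a | g a = true} := by
    ext a
    cases hf : f a <;> cases hg : g a <;> simp [Set.mem_symmDiff, hf, hg]
  rw [coordUnion, this, Set.image_symmDiff e.injective, componentUnion_symmDiff]; rfl

theorem coordUnion_subset_coordUnion {f g : α → Bool} :
    coordUnion e f ⊆ coordUnion e g ↔ f ≤ g := by
  rw [coordUnion, coordUnion, componentUnion_subset_componentUnion,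
    Set.image_subset_image_iff e.injective]
  simp [Set.subset_def, Pi.le_def, Bool.le_iff_imp]

theorem isComponentUnion_iff_exists_eq_coordUnion {X : Set V} :
    IsComponentUnion G D X ↔ ∃ f, X = coordUnion e f := by
  classical
  rw [isComponentUnion_iff_exists_eq_componentUnion]
  refine ⟨fun ⟨S, hS⟩ => ⟨fun a => decide (e a ∈ S), ?_⟩, fun ⟨f, hf⟩ => ⟨_, hf⟩⟩
  rw [hS, coordUnion]
  congr
  simp only [decide_eq_true_eq]
  exact (e.image_preimage S).symm

def cubeCoord (s : Set V) (f : α → Bool) : Set V := s ∆ coordUnion e f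

theorem cubeCoord_symmDiff_cubeCoord (s : Set V) (f g : α → Bool) :
    cubeCoord e s f ∆ cubeCoord e s g = coordUnion e (f ∆ g) := by
  simp [cubeCoord, coordUnion_symmDiff, ← symmDiff_assoc]

theorem cubeCoord_injective (s : Set V) : Function.Injective (cubeCoord e s) := fun _ _ h => by
  have h' := symmDiff_right_injective s h
  exact le_antisymm ((coordUnion_subset_coordUnion e).1 h'.le)
    ((coordUnion_subset_coordUnion e).1 h'.ge)

end Coordinates

section CubeCoordinates

variable {α : Type*} {s t : Set V} (e : α ≃ (G.induce (s ∆ t)).ConnectedComponent)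

theorem range_cubeCoord : Set.range (cubeCoord e s) = stabCube G s t := by
  ext u
  rw [mem_stabCube, isComponentUnion_iff_exists_eq_coordUnion e]
  refine exists_congr fun f => ⟨fun h => ?_, fun h => ?_⟩
  · rw [← h, cubeCoord, symmDiff_symmDiff_cancel_left]
  · rw [cubeCoord, ← h, symmDiff_symmDiff_cancel_left]

theorem image_cubeCoord_face (f₁ f₂ : α → Bool) :
    cubeCoord e s '' {x | x ∆ f₁ ≤ f₁ ∆ f₂} =
      stabCube G (cubeCoord e s f₁) (cubeCoord e s f₂) := by
  ext u
  rw [mem_stabCube, cubeCoord_symmDiff_cubeCoord,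
    (isComponentUnion_coordUnion e _).isComponentUnion_iff]
  constructor
  · rintro ⟨x, hx, rfl⟩
    rw [cubeCoord_symmDiff_cubeCoord, coordUnion_subset_coordUnion, symmDiff_comm]
    exact ⟨hx, isComponentUnion_coordUnion e _⟩
  · rintro ⟨hsub, hu⟩
    obtain ⟨g, hg⟩ := (isComponentUnion_iff_exists_eq_coordUnion e).1 hu
    refine ⟨f₁ ∆ g, ?_, ?_⟩
    · rw [hg, coordUnion_subset_coordUnion] at hsub
      simpa using hsub
    · rw [← symmDiff_right_inj (a := cubeCoord e s f₁), cubeCoord_symmDiff_cubeCoord,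
        symmDiff_symmDiff_cancel_left, hg]

end CubeCoordinates

section StableSetComplex

variable (G) in
abbrev StableSet := {s : Set V // IsStableSet G s}

variable (G) in
def stableCube (s t : StableSet G) : Set (StableSet G) :=
  Subtype.val ⁻¹' stabCube G s.1 t.1

variable {s t u v w : StableSet G}

theorem left_mem_stableCube : s ∈ stableCube G s t := left_mem_stabCube

theorem right_mem_stableCube : t ∈ stableCube G s t := right_mem_stabCube

theorem stabCube_subset_range_val :
    stabCube G s.1 t.1 ⊆ Set.range (Subtype.val : StableSet G → Set V) :=
  fun _ hu => ⟨⟨_, isStableSet_of_mem_stabCube s.2 t.2 hu⟩, rfl⟩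

theorem stableCube_subset_stableCube (hv : v ∈ stableCube G s t) (hw : w ∈ stableCube G s t) :
    stableCube G v w ⊆ stableCube G s t :=
  Set.preimage_mono (stabCube_subset_stabCube hv hw)

theorem exists_stableCube_inter_eq {s₁ t₁ s₂ t₂ : StableSet G} (hu₁ : u ∈ stableCube G s₁ t₁)
    (hu₂ : u ∈ stableCube G s₂ t₂) :
    ∃ a b, stableCube G s₁ t₁ ∩ stableCube G s₂ t₂ = stableCube G a b := by
  obtain ⟨w, hw, h⟩ := exists_stabCube_inter_eq hu₁ hu₂
  exact ⟨u, ⟨w, isStableSet_of_mem_stabCube s₁.2 t₁.2 hw⟩, by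
    rw [stableCube, stableCube, ← Set.preimage_inter, h]; rfl⟩

theorem stableCube_eq_pair_iff (hvw : v ≠ w) :
    stableCube G v w = {v, w} ↔ (G.induce (v.1 ∆ w.1)).Connected := by
  have hpair : ({v, w} : Set (StableSet G)) = Subtype.val ⁻¹' {v.1, w.1} := by
    rw [← Set.image_pair, Subtype.val_injective.preimage_image]
  rw [hpair, stableCube, Set.preimage_eq_preimage' stabCube_subset_range_val
      (Set.pair_subset (Set.mem_range_self v) (Set.mem_range_self w)),
    stabCube_eq_pair_iff (Subtype.val_injective.ne hvw)]

variable {α : Type*} (e : α ≃ (G.induce (s.1 ∆ t.1)).ConnectedComponent)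

def stableCubeCoord (f : α → Bool) : StableSet G :=
  ⟨cubeCoord e s.1 f,
    isStableSet_of_mem_stabCube s.2 t.2 (range_cubeCoord e ▸ Set.mem_range_self f)⟩

theorem stableCubeCoord_injective : Function.Injective (stableCubeCoord e) :=
  fun _ _ h => cubeCoord_injective e s.1 (congrArg Subtype.val h)

theorem image_stableCubeCoord (F : Set (α → Bool)) :
    stableCubeCoord e '' F = Subtype.val ⁻¹' (cubeCoord e s.1 '' F) := by
  rw [← Subtype.val_injective.preimage_image (stableCubeCoord e '' F), Set.image_image]
  rfl

theorem range_stableCubeCoord : Set.range (stableCubeCoord e) = stableCube G s t := by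
  rw [← Set.image_univ, image_stableCubeCoord, Set.image_univ, range_cubeCoord]
  rfl

theorem image_stableCubeCoord_face (f₁ f₂ : α → Bool) :
    stableCubeCoord e '' {x | x ∆ f₁ ≤ f₁ ∆ f₂} =
      stableCube G (stableCubeCoord e f₁) (stableCubeCoord e f₂) := by
  rw [image_stableCubeCoord, image_cubeCoord_face]
  rfl

theorem image_stableCubeCoord_eq_stableCube_iff {F : Set (α → Bool)} :
    (∃ a b, stableCubeCoord e '' F = stableCube G a b) ↔
      ∃ f₁ f₂, F = {x | x ∆ f₁ ≤ f₁ ∆ f₂} := by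
  refine ⟨fun ⟨a, b, hF⟩ => ?_, fun ⟨f₁, f₂, hF⟩ => ⟨_, _, hF ▸ image_stableCubeCoord_face e f₁ f₂⟩⟩
  obtain ⟨f₁, -, rfl⟩ := hF.symm.subset left_mem_stableCube
  obtain ⟨f₂, -, rfl⟩ := hF.symm.subset right_mem_stableCube
  rw [← image_stableCubeCoord_face] at hF
  exact ⟨f₁, f₂, Set.image_injective.2 (stableCubeCoord_injective e) hF⟩

end StableSetComplex

variable (G) in
def stableSetComplex [Finite V] : AbstractCubicalComplex (StableSet G) where
  cubes := {c | ∃ s t, c = stableCube G s t}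
  inter_closed := by
    rintro _ ⟨s₁, t₁, rfl⟩ _ ⟨s₂, t₂, rfl⟩
    exact (stableCube G s₁ t₁ ∩ stableCube G s₂ t₂).eq_empty_or_nonempty.imp_right
      fun ⟨_, hu₁, hu₂⟩ => exists_stableCube_inter_eq hu₁ hu₂
  cube_structure := by
    rintro _ ⟨s, t, rfl⟩
    obtain ⟨d, ⟨e⟩⟩ := Finite.exists_equiv_fin (G.induce (s.1 ∆ t.1)).ConnectedComponent
    refine ⟨d, stableCubeCoord e.symm, stableCubeCoord_injective e.symm,
      range_stableCubeCoord e.symm, fun F =>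
        (image_stableCubeCoord_eq_stableCube_iff e.symm).trans isCubeFace_iff.symm⟩

theorem isNeighbourly_stableSetComplex [Finite V] : IsNeighbourly (stableSetComplex G) :=
  fun v w => ⟨_, ⟨v, w, rfl⟩, left_mem_stableCube, right_mem_stableCube⟩

theorem complexGraph_stableSetComplex [Finite V] :
    complexGraph (stableSetComplex G) = stableSetGraph G := by
  ext v w
  refine and_congr_right fun hvw => ⟨fun ⟨s, t, hst⟩ => ?_,
    fun h => ⟨v, w, ((stableCube_eq_pair_iff hvw).2 h).symm⟩⟩
  have hsub : stableCube G v w ⊆ {v, w} :=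
    hst ▸ stableCube_subset_stableCube (hst ▸ .inl rfl) (hst ▸ .inr rfl)
  exact (stableCube_eq_pair_iff hvw).1
    (hsub.antisymm (Set.pair_subset left_mem_stableCube right_mem_stableCube))

end StableSetCubes

/-- For every finite graph `G` there is a neighbourly abstract cubical complex on the
stable sets of `G` whose graph is the graph of the stable set polytope `STAB(G)`;
explicitly, its cubes are the cubes `c_{st}` spanned by pairs of stable sets `s, t`. -/
theorem stableSetGraph_is_graph_of_neighbourly_cubical_complex
    {V : Type*} [Fintype V] (G : SimpleGraph V) :
    ∃ K : AbstractCubicalComplex {s : Set V // IsStableSet G s},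
      IsNeighbourly K ∧ complexGraph K = stableSetGraph G ∧
      K.cubes = {c | ∃ s t : {s : Set V // IsStableSet G s},
        c = {u : {s : Set V // IsStableSet G s} | u.1 ∈ stabCube G s.1 t.1}} :=
  ⟨stableSetComplex G, isNeighbourly_stableSetComplex, complexGraph_stableSetComplex, rfl⟩
end
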